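/- arXiv:1410.6601 — 9 statements merged into one kernel-verified Lean document; each statement's English description precedes it below -/
import Mathlib

section
/- If p(x) = a_0 + a_1 x + ... + a_n x^n is a polynomial with nonnegative real coefficients all of whose roots are real, then the sequence b_k = a_k / C(n,k) is log-concave: b_k^2 ≥ b_{k-1} b_{k+1} for all 1 ≤ k ≤ n-1. -/
/-!
Differentiating `p` `j` times, reflecting in degree `t + 2 = n - j`, and differentiating `t`
more times keeps all roots real (Rolle's theorem; reflection sends a root `r ≠ 0` to `1 / r`)
and leaves a quadratic with coefficients `n! b_{j+2} / 2`, `n! b_{j+1}`, `n! b_j / 2`.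
Its discriminant is nonnegative, which is `b_{j+1}² ≥ b_j b_{j+2}`.
-/

open Polynomial

namespace Polynomial

open Nat

theorem splits_of_forall_aeval_complex_eq_zero_im_eq_zero {p : ℝ[X]}
    (h : ∀ z : ℂ, aeval z p = 0 → z.im = 0) : p.Splits := by
  refine (IsAlgClosed.splits (p.map (algebraMap ℝ ℂ))).of_splits_map _ fun z hz => ?_
  have hz' : aeval z p = 0 := by
    rw [aeval_def, ← eval_map]
    exact (mem_roots'.mp hz).2
  exact ⟨z.re, Complex.ext rfl (h z hz').symm⟩

-- Rolle: between consecutive roots of `p` lies a root of `p'`, so `p'` loses at most one root.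
theorem Splits.derivative {p : ℝ[X]} (hp : p.Splits) : (derivative p).Splits := by
  rw [splits_iff_card_roots] at hp ⊢
  have := p.card_roots_le_derivative
  have := card_roots' p.derivative
  have := natDegree_derivative_le p
  omega

theorem Splits.iterate_derivative {p : ℝ[X]} (hp : p.Splits) (k : ℕ) :
    (Polynomial.derivative^[k] p).Splits := by
  induction k with
  | zero => exact hp
  | succ k ih => rw [Function.iterate_succ_apply']; exact ih.derivative

section Field

variable {K : Type*} [Field K]

theorem Splits.reverse {f : K[X]} (hf : f.Splits) : f.reverse.Splits := by
  induction hf using Submonoid.closure_induction with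
  | mem g hg =>
    refine Splits.of_natDegree_le_one ((reverse_natDegree_le g).trans ?_)
    rcases hg with ⟨a, rfl⟩ | ⟨a, rfl⟩
    · rw [natDegree_C]; exact zero_le_one
    · rw [natDegree_X_add_C]
  | one => rw [← C_1, reverse_C]; exact Splits.C 1
  | mul f g _ _ hf hg => rw [reverse_mul_of_domain]; exact hf.mul hg

theorem Splits.reflect {f : K[X]} (hf : f.Splits) {N : ℕ} (hN : f.natDegree ≤ N) :
    (reflect N f).Splits := by
  have h := reflect_mul f 1 le_rfl (natDegree_one.trans_le (zero_le (N - f.natDegree)))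
  rw [mul_one, add_tsub_cancel_of_le hN, reflect_one] at h
  rw [h]
  exact hf.reverse.mul (Splits.X_pow _)

theorem Splits.discrim_nonneg [LinearOrder K] [IsStrictOrderedRing K] {s : K[X]}
    (hs : s.Splits) (hdeg : s.natDegree ≤ 2) :
    0 ≤ discrim (s.coeff 2) (s.coeff 1) (s.coeff 0) := by
  rcases eq_or_ne s.natDegree 0 with h0 | h0
  · rw [coeff_eq_zero_of_natDegree_lt (by omega : s.natDegree < 2),
      coeff_eq_zero_of_natDegree_lt (by omega : s.natDegree < 1)]
    simp [discrim]
  obtain ⟨x, hx⟩ := hs.exists_eval_eq_zero (degree_ne_of_natDegree_ne h0)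
  rw [eval_eq_sum_range' (by omega : s.natDegree < 3)] at hx
  simp only [Finset.sum_range_succ, Finset.sum_range_zero] at hx
  rw [discrim_eq_sq_of_quadratic_eq_zero (x := x) (by linear_combination hx)]
  exact sq_nonneg _

end Field

theorem factorial_mul_coeff_iterate_derivative {R : Type*} [Semiring R] (p : R[X]) (k m : ℕ) :
    (m ! : R) * (derivative^[k] p).coeff m = (m + k)! * p.coeff (m + k) := by
  rw [coeff_iterate_derivative, nsmul_eq_mul, ← mul_assoc, ← cast_mul,
    ← factorial_mul_descFactorial (le_add_left k m), add_tsub_cancel_right]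

theorem Splits.factorial_mul_coeff_mul_le_sq {p : ℝ[X]} (hp : p.Splits) {j t : ℕ}
    (hdeg : p.natDegree ≤ j + t + 2) :
    ((t + 2)! * j ! * p.coeff j) * (t ! * (j + 2)! * p.coeff (j + 2)) ≤
      ((t + 1)! * (j + 1)! * p.coeff (j + 1)) ^ 2 := by
  set q := Polynomial.derivative^[j] p with hq_def
  set s := Polynomial.derivative^[t] (Polynomial.reflect (t + 2) q) with hs_def
  have hq : q.natDegree ≤ t + 2 := (natDegree_iterate_derivative p j).trans (by omega)
  have hs : s.Splits := ((hp.iterate_derivative j).reflect hq).iterate_derivative t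
  have hsdeg : s.natDegree ≤ 2 := by
    have := natDegree_reflect_le (N := t + 2) (p := q)
    exact (natDegree_iterate_derivative _ t).trans (by omega)
  have hcoeff (i : ℕ) (hi : i ≤ 2) :
      ((2 - i)! : ℝ) * (i ! * s.coeff i) = (t + i)! * (j + (2 - i))! * p.coeff (j + (2 - i)) := by
    rw [hs_def, factorial_mul_coeff_iterate_derivative, coeff_reflect, revAt_le (by omega),
      show t + 2 - (i + t) = 2 - i by omega, mul_left_comm, hq_def,
      factorial_mul_coeff_iterate_derivative, add_comm i, add_comm (2 - i), mul_assoc]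
  have h0 : 2 * s.coeff 0 = t ! * (j + 2)! * p.coeff (j + 2) := by simpa using hcoeff 0 (by omega)
  have h1 : s.coeff 1 = (t + 1)! * (j + 1)! * p.coeff (j + 1) := by simpa using hcoeff 1 (by omega)
  have h2 : 2 * s.coeff 2 = (t + 2)! * j ! * p.coeff j := by simpa using hcoeff 2 (by omega)
  rw [← h0, ← h1, ← h2]
  have hdisc := hs.discrim_nonneg hsdeg
  rw [discrim] at hdisc
  linarith

theorem Splits.coeff_div_choose_mul_le_sq {p : ℝ[X]} (hp : p.Splits) {n j : ℕ}
    (hdeg : p.natDegree ≤ n) (hj : j + 2 ≤ n) :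
    (p.coeff j / n.choose j) * (p.coeff (j + 2) / n.choose (j + 2)) ≤
      (p.coeff (j + 1) / n.choose (j + 1)) ^ 2 := by
  obtain ⟨t, rfl⟩ : ∃ t, n = j + t + 2 := ⟨n - j - 2, by omega⟩
  have key := hp.factorial_mul_coeff_mul_le_sq hdeg
  rw [cast_choose ℝ (by omega : j ≤ _), cast_choose ℝ (by omega : j + 1 ≤ _),
    cast_choose ℝ (by omega : j + 2 ≤ _), show j + t + 2 - j = t + 2 by omega,
    show j + t + 2 - (j + 1) = t + 1 by omega, show j + t + 2 - (j + 2) = t by omega]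
  field_simp
  linear_combination key

end Polynomial

theorem normalized_coeffs_log_concave_of_real_rooted_general
    (n : ℕ) (a : ℕ → ℝ)
    (hroots : ∀ z : ℂ,
      aeval z (∑ k ∈ Finset.range (n + 1), C (a k) * X ^ k) = 0 → z.im = 0)
    (k : ℕ) (hk : 1 ≤ k) (hkn : k ≤ n - 1) :
    (a (k - 1) / (n.choose (k - 1) : ℝ)) * (a (k + 1) / (n.choose (k + 1) : ℝ)) ≤
      (a k / (n.choose k : ℝ)) ^ 2 := by
  set p : ℝ[X] := ∑ i ∈ Finset.range (n + 1), C (a i) * X ^ i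
  have hcoeff (i : ℕ) (hi : i ≤ n) : p.coeff i = a i := by
    simp [p, Nat.lt_succ_of_le hi]
  have hdeg : p.natDegree ≤ n := natDegree_sum_le_of_forall_le _ _ fun i hi =>
    (natDegree_C_mul_X_pow_le (a i) i).trans (Nat.le_of_lt_succ (Finset.mem_range.mp hi))
  obtain ⟨j, rfl⟩ : ∃ j, k = j + 1 := ⟨k - 1, by omega⟩
  have hp : p.Splits := splits_of_forall_aeval_complex_eq_zero_im_eq_zero hroots
  have newton := hp.coeff_div_choose_mul_le_sq hdeg (j := j) (by omega)
  rwa [hcoeff j (by omega), hcoeff (j + 1) (by omega), hcoeff (j + 2) (by omega)] at newton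

theorem normalized_coeffs_log_concave_of_real_rooted
    (n : ℕ) (a : ℕ → ℝ) (ha : ∀ k, k ≤ n → 0 ≤ a k)
    (hroots : ∀ z : ℂ,
      aeval z (∑ k ∈ Finset.range (n + 1), C (a k) * X ^ k) = 0 → z.im = 0)
    (k : ℕ) (hk : 1 ≤ k) (hkn : k ≤ n - 1) :
    (a (k - 1) / (n.choose (k - 1) : ℝ)) * (a (k + 1) / (n.choose (k + 1) : ℝ)) ≤
      (a k / (n.choose k : ℝ)) ^ 2 :=
  normalized_coeffs_log_concave_of_real_rooted_general n a hroots k hk hkn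
end

section
/- For every n ≥ 1, the polynomial E_n(x) = Σ_{k=1}^n k!·S(n,k)·x^k has only real roots, all lying in the interval [-1,0]. -/
/-!
The Fubini polynomials satisfy `E_{n+1} = X · ((X + 1) E_n)'` for `n ≥ 1`. By the Gauss–Lucas
theorem the roots of `((X + 1) E_n)'` lie in the convex hull of `-1` and the roots of `E_n`, so by
induction every complex root of `E_n` lies in the segment `[-1, 0]`.
-/

open Polynomial

/-- Stirling numbers of the second kind. -/
def stirling2 : ℕ → ℕ → ℕ
  | 0, 0 => 1
  | 0, _ + 1 => 0
  | _ + 1, 0 => 0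
  | n + 1, k + 1 => (k + 1) * stirling2 n (k + 1) + stirling2 n k

theorem stirling2_eq_stirlingSecond : stirling2 = Nat.stirlingSecond := by
  funext n k
  induction n generalizing k with
  | zero => cases k <;> rfl
  | succ n ih =>
    cases k with
    | zero => rfl
    | succ k => rw [stirling2, ih, ih, Nat.stirlingSecond_succ_succ]

theorem rootSet_mul_subset {T S : Type*} [CommRing T] [CommRing S] [IsDomain S]
    [Algebra T S] (p q : T[X]) : (p * q).rootSet S ⊆ p.rootSet S ∪ q.rootSet S := by
  intro a ha
  obtain ⟨hpq, ha⟩ := mem_rootSet'.1 ha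
  rw [Polynomial.map_mul] at hpq
  rw [aeval_mul, mul_eq_zero] at ha
  exact ha.imp (fun h => mem_rootSet'.2 ⟨left_ne_zero_of_mul hpq, h⟩)
    (fun h => mem_rootSet'.2 ⟨right_ne_zero_of_mul hpq, h⟩)

theorem rootSet_derivative_subset_of_convex {P : ℂ[X]} {K : Set ℂ} (hK : Convex ℝ K)
    (hP : 0 < P.degree) (h : P.rootSet ℂ ⊆ K) : P.derivative.rootSet ℂ ⊆ K :=
  (rootSet_derivative_subset_convexHull_rootSet hP).trans (convexHull_min h hK)

noncomputable def fubiniPoly (R : Type*) [Semiring R] (n : ℕ) : R[X] :=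
  ∑ k ∈ Finset.Icc 1 n, C ((k.factorial * stirling2 n k : ℕ) : R) * X ^ k

section

variable {R : Type*} [Semiring R]

theorem coeff_fubiniPoly {n : ℕ} (hn : n ≠ 0) (j : ℕ) :
    (fubiniPoly R n).coeff j = (j.factorial * Nat.stirlingSecond n j : ℕ) := by
  rw [fubiniPoly, finsetSum_coeff]
  simp only [coeff_C_mul_X_pow, stirling2_eq_stirlingSecond]
  rw [Finset.sum_ite_eq]
  split_ifs with hj
  · rfl
  · rcases Nat.eq_zero_or_pos j with rfl | hj₀
    · obtain ⟨m, rfl⟩ := Nat.exists_eq_succ_of_ne_zero hn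
      simp
    · have hnj : n < j := by
        simp only [Finset.mem_Icc, not_and, not_le] at hj
        omega
      simp [Nat.stirlingSecond_eq_zero_of_lt hnj]

theorem fubiniPoly_one : fubiniPoly R 1 = X := by
  simp [fubiniPoly, stirling2]

theorem fubiniPoly_ne_zero [CharZero R] {n : ℕ} (hn : n ≠ 0) : fubiniPoly R n ≠ 0 := by
  intro h
  have hcoeff := coeff_fubiniPoly (R := R) hn n
  rw [h, coeff_zero, Nat.stirlingSecond_self, mul_one, eq_comm, Nat.cast_eq_zero] at hcoeff
  exact n.factorial_ne_zero hcoeff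

theorem map_fubiniPoly {S : Type*} [Semiring S] (f : R →+* S) (n : ℕ) :
    (fubiniPoly R n).map f = fubiniPoly S n := by
  simp [fubiniPoly, Polynomial.map_sum]

end

theorem fubiniPoly_succ {R : Type*} [CommSemiring R] {n : ℕ} (hn : n ≠ 0) :
    fubiniPoly R (n + 1) = X * derivative ((X + 1) * fubiniPoly R n) := by
  ext (_ | j)
  · rw [coeff_fubiniPoly n.succ_ne_zero, coeff_X_mul_zero]
    simp
  · rw [coeff_fubiniPoly n.succ_ne_zero, coeff_X_mul, coeff_derivative, add_mul, one_mul,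
      coeff_add, coeff_X_mul, coeff_fubiniPoly hn, coeff_fubiniPoly hn,
      Nat.stirlingSecond_succ_succ]
    push_cast [Nat.factorial_succ]
    ring

theorem rootSet_fubiniPoly_subset_segment (n : ℕ) :
    (fubiniPoly ℂ n).rootSet ℂ ⊆ segment ℝ (-1) 0 := by
  have hX : (X : ℂ[X]).rootSet ℂ ⊆ segment ℝ (-1) 0 := by
    rw [← pow_one X, rootSet_X_pow one_ne_zero, Set.singleton_subset_iff]
    exact right_mem_segment ℝ _ _
  induction n with
  | zero => simp [fubiniPoly]
  | succ n ih =>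
    rcases eq_or_ne n 0 with rfl | hn
    · rwa [fubiniPoly_one]
    set Q := (X + 1) * fubiniPoly ℂ n
    have hQ : 0 < Q.degree :=
      degree_pos_of_root (a := -1) (mul_ne_zero (X_add_C_ne_zero 1) (fubiniPoly_ne_zero hn))
        (by simp [Q])
    have hQroots : Q.rootSet ℂ ⊆ segment ℝ (-1) 0 := by
      refine (rootSet_mul_subset _ _).trans (Set.union_subset ?_ ih)
      intro z hz
      rw [mem_rootSet', aeval_add, aeval_X, map_one, add_eq_zero_iff_eq_neg] at hz
      exact hz.2 ▸ left_mem_segment ℝ _ _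
    rw [fubiniPoly_succ hn]
    exact (rootSet_mul_subset _ _).trans (Set.union_subset hX
      (rootSet_derivative_subset_of_convex (convex_segment _ _) hQ hQroots))

theorem En_real_rooted_in_unit_interval (n : ℕ) (hn : 1 ≤ n) :
    ∀ z : ℂ,
      aeval z (∑ k ∈ Finset.Icc 1 n,
          C ((k.factorial * stirling2 n k : ℕ) : ℝ) * X ^ k) = 0 →
      z.im = 0 ∧ -1 ≤ z.re ∧ z.re ≤ 0 := by
  intro z hz
  have hroot : z ∈ (fubiniPoly ℂ n).rootSet ℂ := by
    refine mem_rootSet.2 ⟨fubiniPoly_ne_zero (Nat.one_le_iff_ne_zero.1 hn), ?_⟩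
    rwa [← map_fubiniPoly (algebraMap ℝ ℂ), aeval_map_algebraMap]
  obtain ⟨a, b, ha, hb, hab, rfl⟩ := rootSet_fubiniPoly_subset_segment n hroot
  simp only [smul_neg, Complex.real_smul, mul_one, smul_zero, add_zero, Complex.neg_im,
    Complex.ofReal_im, neg_zero, Complex.neg_re, Complex.ofReal_re, neg_le_neg_iff,
    Left.neg_nonpos_iff, true_and]
  exact ⟨by linarith, ha⟩
end

section
/- If h(x) = Σ_{k=0}^d h_k x^k is a polynomial with nonnegative coefficients, symmetric in the sense that h_k = h_{d-k} for all k, and all roots of h are real, then h is γ-nonnegative: h(x) = Σ_{k=0}^{⌊d/2⌋} γ_k x^k (1+x)^{d-2k} with all γ_k ≥ 0. -/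
/-!
By symmetry, `x⁻¹` is a root whenever `x ≠ 0` is one, and since the coefficients are nonnegative
every real root is `≤ 0`. So a symmetric real-rooted `h` splits into symmetric factors `X`, `X + 1`
and `(X - x)(X - x⁻¹) = (1 + X)² + (-x - x⁻¹ - 2) X` with `x < 0`, `x ≠ -1`, where
`-x - x⁻¹ - 2 = (x + 1)² / (-x) ≥ 0`. Each factor is γ-nonnegative, and γ-nonnegativity is
preserved by products, with the centres of symmetry adding up.
-/

open Polynomial

namespace Polynomial

section Mirror

theorem natDegree_add_natTrailingDegree_eq_of_coeff_symm {R : Type*} [Semiring R] {p : R[X]}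
    {d : ℕ} (hp0 : p ≠ 0) (hdeg : p.natDegree ≤ d)
    (hsym : ∀ k, k ≤ d → p.coeff k = p.coeff (d - k)) :
    p.natDegree + p.natTrailingDegree = d := by
  have htrail_le := p.natTrailingDegree_le_natDegree
  have hlead : p.coeff (d - p.natDegree) ≠ 0 := by
    rw [hsym _ (Nat.sub_le _ _), Nat.sub_sub_self hdeg]
    exact leadingCoeff_ne_zero.mpr hp0
  have htrail : p.coeff (d - p.natTrailingDegree) ≠ 0 := by
    rw [hsym _ (Nat.sub_le _ _), Nat.sub_sub_self (htrail_le.trans hdeg)]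
    exact trailingCoeff_nonzero_iff_nonzero.mpr hp0
  have := natTrailingDegree_le_of_ne_zero hlead
  have := le_natDegree_of_ne_zero htrail
  omega

theorem mirror_eq_self_of_coeff_symm {R : Type*} [Semiring R] {p : R[X]} {d : ℕ}
    (hd : p.natDegree + p.natTrailingDegree = d)
    (hsym : ∀ k, k ≤ d → p.coeff k = p.coeff (d - k)) : p.mirror = p := by
  ext k
  rw [coeff_mirror, hd]
  rcases le_or_gt k d with hk | hk
  · rw [revAt_le hk]
    exact (hsym k hk).symm
  · rw [revAt_eq_self_of_lt hk]

theorem mirror_eq_self_of_mul_left {R : Type*} [Ring R] [NoZeroDivisors R] {f q : R[X]}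
    (hf : f.mirror = f) (hf0 : f ≠ 0) (hfq : (f * q).mirror = f * q) : q.mirror = q := by
  rw [mirror_mul_of_domain, hf] at hfq
  exact mul_left_cancel₀ hf0 hfq

variable {K : Type*} [Field K]

theorem mirror_X_sub_C {x : K} (hx : x ≠ 0) : (X - C x).mirror = C (-x) * (X - C x⁻¹) := by
  have htrail : (X - C x).natTrailingDegree = 0 := by simp [hx]
  have hX : (X : K[X]).reverse = 1 := by
    have := reverse_mul_X (C 1 : K[X])
    rwa [C_1, one_mul, ← C_1, reverse_C] at this
  rw [mirror, htrail, pow_zero, mul_one, sub_eq_add_neg, ← C_neg, reverse_add_C, hX]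
  have : (C (-x) : K[X]) * C x⁻¹ = -1 := by
    rw [← C_mul, neg_mul, mul_inv_cancel₀ hx, C_neg, C_1]
  simp only [natDegree_X, pow_one]
  linear_combination this

theorem mirror_X_sub_C_mul_X_sub_C_inv {x : K} (hx : x ≠ 0) :
    ((X - C x) * (X - C x⁻¹)).mirror = (X - C x) * (X - C x⁻¹) := by
  rw [mirror_mul_of_domain, mirror_X_sub_C hx, mirror_X_sub_C (inv_ne_zero hx), inv_inv]
  have : (C (-x) : K[X]) * C (-x⁻¹) = 1 := by
    rw [← C_mul, neg_mul_neg, mul_inv_cancel₀ hx, C_1]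
  linear_combination ((X - C x) * (X - C x⁻¹)) * this

theorem IsRoot.inv_of_mirror_eq_self {p : K[X]} {x : K} (hp : p.mirror = p) (hx : p.IsRoot x) :
    p.IsRoot x⁻¹ := by
  rcases eq_or_ne x 0 with rfl | hx0
  · simpa using hx
  have : Invertible x := invertibleOfNonzero hx0
  have hrev : eval x⁻¹ p.reverse = 0 := by
    simpa [eval₂_eq_eval_map] using (eval₂_reverse_eq_zero_iff (RingHom.id K) x p).mpr hx
  rw [IsRoot, ← hp, mirror, eval_mul, hrev, zero_mul]

theorem X_sub_C_mul_X_sub_C_inv_dvd_of_mirror_eq_self {p : K[X]} {x : K} (hp : p.mirror = p)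
    (hx : p.IsRoot x) (hx_ne : x ≠ x⁻¹) : (X - C x) * (X - C x⁻¹) ∣ p :=
  (isCoprime_X_sub_C_of_isUnit_sub (sub_ne_zero.mpr hx_ne).isUnit).mul_dvd
    (dvd_iff_isRoot.mpr hx) (dvd_iff_isRoot.mpr (hx.inv_of_mirror_eq_self hp))

end Mirror

theorem eval_pos_of_coeff_nonneg {R : Type*} [Semiring R] [PartialOrder R] [IsStrictOrderedRing R]
    {p : R[X]} {x : R} (hp0 : p ≠ 0) (hcoeff : ∀ k, 0 ≤ p.coeff k) (hx : 0 < x) :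
    0 < p.eval x := by
  rw [eval_eq_sum_range]
  refine Finset.sum_pos' (fun k _ => mul_nonneg (hcoeff k) (pow_nonneg hx.le k))
    ⟨p.natDegree, Finset.self_mem_range_succ _, mul_pos ?_ (pow_pos hx _)⟩
  exact (hcoeff _).lt_of_ne' (leadingCoeff_ne_zero.mpr hp0)

def IsRealRooted (p : ℝ[X]) : Prop :=
  ∀ z : ℂ, aeval z p = 0 → z.im = 0

theorem IsRealRooted.of_dvd {p q : ℝ[X]} (hp : IsRealRooted p) (hqp : q ∣ p) :
    IsRealRooted q := by
  obtain ⟨r, rfl⟩ := hqp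
  intro z hz
  exact hp z (by rw [map_mul, hz, zero_mul])

theorem IsRealRooted.exists_isRoot {p : ℝ[X]} (hp : IsRealRooted p) (hdeg : 0 < p.natDegree) :
    ∃ x : ℝ, p.IsRoot x := by
  obtain ⟨z, hz⟩ := Complex.exists_root (f := p.map (algebraMap ℝ ℂ))
    (by rw [degree_map]; exact natDegree_pos_iff_degree_pos.mp hdeg)
  have hz' : aeval z p = 0 := by rwa [IsRoot, eval_map, ← aeval_def] at hz
  have hre : (z.re : ℂ) = z := Complex.ext rfl (by simp [hp z hz'])
  refine ⟨z.re, ?_⟩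
  rw [← hre, ← Complex.ofRealCLM_apply] at hz'
  exact Complex.ofReal_eq_zero.mp ((aeval_ofReal (K := ℂ) p z.re).symm.trans hz')

section GammaNonneg

variable {R : Type*} [CommSemiring R] [PartialOrder R]

def IsGammaNonneg (d : ℕ) (p : R[X]) : Prop :=
  ∃ γ : ℕ → R, (∀ k, k ≤ d / 2 → 0 ≤ γ k) ∧
    p = ∑ k ∈ Finset.range (d / 2 + 1), C (γ k) * X ^ k * (1 + X) ^ (d - 2 * k)

variable {d m n : ℕ} {p q : R[X]}

theorem isGammaNonneg_zero : IsGammaNonneg d (0 : R[X]) :=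
  ⟨0, fun _ _ => le_rfl, by simp⟩

theorem isGammaNonneg_C_mul_X_pow_mul {c : R} {k : ℕ} (hc : 0 ≤ c) (hk : 2 * k ≤ d) :
    IsGammaNonneg d (C c * X ^ k * (1 + X) ^ (d - 2 * k)) := by
  refine ⟨fun j => if j = k then c else 0, fun j _ => by dsimp only; split_ifs <;> simp [hc], ?_⟩
  rw [Finset.sum_eq_single_of_mem k (Finset.mem_range.mpr (by omega)) fun j _ hj => by simp [hj]]
  simp

theorem isGammaNonneg_C {c : R} (hc : 0 ≤ c) : IsGammaNonneg 0 (C c) := by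
  simpa using isGammaNonneg_C_mul_X_pow_mul (d := 0) (k := 0) hc le_rfl

variable [IsOrderedRing R]

theorem IsGammaNonneg.add (hp : IsGammaNonneg d p) (hq : IsGammaNonneg d q) :
    IsGammaNonneg d (p + q) := by
  obtain ⟨γ, hγ, rfl⟩ := hp
  obtain ⟨δ, hδ, rfl⟩ := hq
  refine ⟨γ + δ, fun k hk => add_nonneg (hγ k hk) (hδ k hk), ?_⟩
  simp only [Pi.add_apply, C_add, add_mul, Finset.sum_add_distrib]

theorem isGammaNonneg_sum {ι : Type*} {s : Finset ι} {f : ι → R[X]}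
    (hf : ∀ i ∈ s, IsGammaNonneg d (f i)) : IsGammaNonneg d (∑ i ∈ s, f i) :=
  Finset.sum_induction f (IsGammaNonneg d) (fun _ _ => IsGammaNonneg.add) isGammaNonneg_zero hf

theorem IsGammaNonneg.mul (hp : IsGammaNonneg m p) (hq : IsGammaNonneg n q) :
    IsGammaNonneg (m + n) (p * q) := by
  obtain ⟨γ, hγ, rfl⟩ := hp
  obtain ⟨δ, hδ, rfl⟩ := hq
  rw [Finset.sum_mul_sum]
  refine isGammaNonneg_sum fun k hk => isGammaNonneg_sum fun j hj => ?_
  have hk : 2 * k ≤ m := by have := Finset.mem_range.mp hk; omega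
  have hj : 2 * j ≤ n := by have := Finset.mem_range.mp hj; omega
  convert isGammaNonneg_C_mul_X_pow_mul (mul_nonneg (hγ k (by omega)) (hδ j (by omega)))
    (show 2 * (k + j) ≤ m + n by omega) using 1
  rw [show m + n - 2 * (k + j) = (m - 2 * k) + (n - 2 * j) by omega, pow_add, pow_add, C_mul]
  ring

theorem isGammaNonneg_X : IsGammaNonneg 2 (X : R[X]) := by
  simpa using isGammaNonneg_C_mul_X_pow_mul (d := 2) (k := 1) (zero_le_one' R) le_rfl

theorem isGammaNonneg_X_add_one : IsGammaNonneg 1 (X + 1 : R[X]) := by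
  simpa [add_comm] using
    isGammaNonneg_C_mul_X_pow_mul (d := 1) (k := 0) (zero_le_one' R) (by norm_num)

end GammaNonneg

theorem isGammaNonneg_X_sub_C_mul_X_sub_C_inv {K : Type*} [Field K] [LinearOrder K]
    [IsStrictOrderedRing K] {x : K} (hx : x < 0) :
    IsGammaNonneg 2 ((X - C x) * (X - C x⁻¹)) := by
  have hx0 : x ≠ 0 := hx.ne
  have hc : 0 ≤ -x - x⁻¹ - 2 := by
    have : -x - x⁻¹ - 2 = (x + 1) ^ 2 * (-x)⁻¹ := by field_simp; ring
    rw [this]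
    exact mul_nonneg (sq_nonneg _) (inv_nonneg.mpr (by linarith))
  have hquad : (X - C x) * (X - C x⁻¹) =
      C 1 * X ^ 0 * (1 + X) ^ (2 - 2 * 0) + C (-x - x⁻¹ - 2) * X ^ 1 * (1 + X) ^ (2 - 2 * 1) := by
    have : (C x : K[X]) * C x⁻¹ = 1 := by rw [← C_mul, mul_inv_cancel₀ hx0, C_1]
    simp only [C_sub, C_neg, C_ofNat, C_1]
    linear_combination this
  rw [hquad]
  exact (isGammaNonneg_C_mul_X_pow_mul zero_le_one (by norm_num)).add
    (isGammaNonneg_C_mul_X_pow_mul hc (by norm_num))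

theorem exists_gammaNonneg_factor {p : ℝ[X]} (hsym : p.mirror = p) (hreal : IsRealRooted p)
    (hpos : ∀ x, 0 < x → 0 < p.eval x) (hdeg : 0 < p.natDegree) :
    ∃ f q : ℝ[X], p = f * q ∧ 0 < f.natDegree ∧ f.mirror = f ∧ (∀ x, 0 < x → 0 < f.eval x) ∧
      IsGammaNonneg (f.natDegree + f.natTrailingDegree) f := by
  obtain ⟨x, hx⟩ := hreal.exists_isRoot hdeg
  have hx_nonpos : x ≤ 0 := not_lt.mp fun h => (hpos x h).ne' hx
  rcases hx_nonpos.eq_or_lt with rfl | hx_neg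
  · obtain ⟨q, hq⟩ := dvd_iff_isRoot.mpr hx
    exact ⟨X, q, by simpa using hq, by simp, mirror_X, fun y hy => by simpa,
      by simpa using isGammaNonneg_X⟩
  rcases eq_or_ne x (-1) with rfl | hx_ne
  · obtain ⟨q, hq⟩ := dvd_iff_isRoot.mpr hx
    have hmirror : (X + 1 : ℝ[X]).mirror = X + 1 := by
      simpa using mirror_X_sub_C (x := (-1 : ℝ)) (by norm_num)
    have hdeg1 : (X + 1 : ℝ[X]).natDegree = 1 := by simpa using natDegree_X_add_C (1 : ℝ)
    have htrail : (X + 1 : ℝ[X]).natTrailingDegree = 0 := by simp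
    refine ⟨X + 1, q, by simpa using hq, by omega, hmirror, fun y hy => ?_, ?_⟩
    · simp only [eval_add, eval_X, eval_one]
      linarith
    · rw [hdeg1, htrail]
      exact isGammaNonneg_X_add_one
  have hx_ne_inv : x ≠ x⁻¹ := by
    intro h
    have := mul_inv_cancel₀ hx_neg.ne
    rw [← h] at this
    exact hx_ne (by nlinarith)
  obtain ⟨q, hq⟩ := X_sub_C_mul_X_sub_C_inv_dvd_of_mirror_eq_self hsym hx hx_ne_inv
  have hdeg2 : ((X - C x) * (X - C x⁻¹)).natDegree = 2 := by
    rw [natDegree_mul (X_sub_C_ne_zero _) (X_sub_C_ne_zero _), natDegree_X_sub_C,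
      natDegree_X_sub_C]
  have htrail : ((X - C x) * (X - C x⁻¹)).natTrailingDegree = 0 := by simp [hx_neg.ne]
  refine ⟨_, q, hq, by omega, mirror_X_sub_C_mul_X_sub_C_inv hx_neg.ne, fun y hy => ?_, ?_⟩
  · simp only [eval_mul, eval_sub, eval_X, eval_C]
    exact mul_pos (by linarith) (by linarith [inv_lt_zero.mpr hx_neg])
  · rw [hdeg2, htrail]
    exact isGammaNonneg_X_sub_C_mul_X_sub_C_inv hx_neg

theorem isGammaNonneg_of_mirror_eq_self {p : ℝ[X]} (hsym : p.mirror = p) (hreal : IsRealRooted p)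
    (hpos : ∀ x, 0 < x → 0 < p.eval x) :
    IsGammaNonneg (p.natDegree + p.natTrailingDegree) p := by
  induction hn : p.natDegree using Nat.strong_induction_on generalizing p with
  | _ n ih =>
  rcases Nat.eq_zero_or_pos n with rfl | hn_pos
  · have htrail : p.natTrailingDegree = 0 := by
      have := p.natTrailingDegree_le_natDegree; omega
    have hp := hpos 1 one_pos
    rw [eq_C_of_natDegree_eq_zero hn, eval_C] at hp
    rw [htrail, eq_C_of_natDegree_eq_zero hn]
    exact isGammaNonneg_C hp.le
  obtain ⟨f, q, rfl, hf_deg, hf_sym, hf_pos, hf_gamma⟩ :=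
    exists_gammaNonneg_factor hsym hreal hpos (hn ▸ hn_pos)
  have hf0 : f ≠ 0 := ne_zero_of_natDegree_gt hf_deg
  have hq0 : q ≠ 0 := by
    rintro rfl
    simpa using hpos 1 one_pos
  rw [natDegree_mul hf0 hq0] at hn
  have hq_gamma := ih q.natDegree (by omega) (mirror_eq_self_of_mul_left hf_sym hf0 hsym)
    (hreal.of_dvd (dvd_mul_left q f))
    (fun x hx => pos_of_mul_pos_right (by simpa using hpos x hx) (hf_pos x hx).le) rfl
  rw [← hn, natTrailingDegree_mul hf0 hq0, add_add_add_comm]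
  exact hf_gamma.mul hq_gamma

end Polynomial

theorem gamma_nonneg_of_symmetric_real_rooted
    (d : ℕ) (h : Polynomial ℝ)
    (hdeg : h.natDegree ≤ d)
    (hnonneg : ∀ k, 0 ≤ h.coeff k)
    (hsym : ∀ k, k ≤ d → h.coeff k = h.coeff (d - k))
    (hroots : ∀ z : ℂ, aeval z h = 0 → z.im = 0) :
    ∃ γ : ℕ → ℝ, (∀ k, k ≤ d / 2 → 0 ≤ γ k) ∧
      h = ∑ k ∈ Finset.range (d / 2 + 1), C (γ k) * X ^ k * (1 + X) ^ (d - 2 * k) := by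
  rcases eq_or_ne h 0 with rfl | hh0
  · exact isGammaNonneg_zero
  have hd := natDegree_add_natTrailingDegree_eq_of_coeff_symm hh0 hdeg hsym
  have hgamma := isGammaNonneg_of_mirror_eq_self (mirror_eq_self_of_coeff_symm hd hsym) hroots
    fun x hx => eval_pos_of_coeff_nonneg hh0 hnonneg hx
  rwa [hd] at hgamma
end

section
/- Let T ⊆ S_n be a set of permutations invariant under the Foata–Strehl Z_2^n-action via the maps φ_S. Then Σ_{π∈T} x^{des(π)} = Σ_i γ_i(T) x^i (1+x)^{n-1-2i} where γ_i(T) = 2^{-n+1+2i}·|{π ∈ T : peak(π) = i}|; in particular the descent polynomial of T is γ-nonnegative. -/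
/-- The letters of the word `w` with the boundary convention `a₀ = a_{n+1} = n+1`:
`ext n w i` is `aᵢ` for `1 ≤ i ≤ n` and `n+1` for `i = 0` and `i = n+1`. -/
def ext (n : ℕ) (w : List ℕ) (i : ℕ) : ℕ := (((n + 1) :: w) ++ [n + 1]).getD i 0

/-- The number of descents of the word `w`: indices `i ∈ [n]` with `aᵢ > a_{i+1}`. -/
def des (n : ℕ) (w : List ℕ) : ℕ :=
  ((Finset.Icc 1 n).filter (fun i => ext n w (i + 1) < ext n w i)).card

/-- The number of peaks of the word `w`: indices `i ∈ [n]` with `a_{i-1} < aᵢ > a_{i+1}`. -/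
def peak (n : ℕ) (w : List ℕ) : ℕ :=
  ((Finset.Icc 1 n).filter
    (fun i => ext n w (i - 1) < ext n w i ∧ ext n w (i + 1) < ext n w i)).card

/-- The Foata–Strehl (valley-hopping) involution `φₓ`. -/
def phi (n x : ℕ) (w : List ℕ) : List ℕ :=
  let l := w.takeWhile (· ≠ x)
  let r := (w.dropWhile (· ≠ x)).tail
  let prev := l.getLastD (n + 1)
  let next := r.headD (n + 1)
  if x < prev ∧ next < x then
    l ++ r.takeWhile (· < x) ++ x :: r.dropWhile (· < x)
  else if prev < x ∧ x < next then
    (l.reverse.dropWhile (· < x)).reverse ++ x :: ((l.reverse.takeWhile (· < x)).reverse ++ r)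
  else w

/-!
Valley hopping `φ_x` moves a double descent `x` rightwards past the maximal run of smaller
letters that follows it, where `x` becomes a double ascent, and conversely; the shape (peak,
valley, double ascent, double descent) of every other letter is unchanged. So, for a set `S` of
double letters of `σ`, hopping all of `S` toggles exactly the letters of `S`. As
`des = peak + #double descents` and there are `n - 1 - 2 peak` double letters, summing over
`S` gives the orbit identity `∑_S x ^ des = x ^ peak (1 + x) ^ (n - 1 - 2 peak)`.
Finally `(σ, S) ↦ (hop_S σ, S)` is a bijection of the pairs with `σ ∈ T`, so averaging the orbit
identity over `T`, with `σ` weighted by `2 ^ -#doubles σ`, yields the formula.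
-/

open scoped Finset

namespace List

variable {α : Type*}

theorem notMem_of_nodup_append_cons {y : α} {A B : List α} (h : (A ++ y :: B).Nodup) :
    y ∉ A ∧ y ∉ B := by
  have := nodup_middle.mp h
  simp_all

theorem takeWhile_ne_append_cons [DecidableEq α] {y : α} {A B : List α} (hy : y ∉ A) :
    (A ++ y :: B).takeWhile (· ≠ y) = A := by
  rw [takeWhile_append_of_pos (by grind)]
  simp

theorem dropWhile_ne_append_cons [DecidableEq α] {y : α} {A B : List α} (hy : y ∉ A) :
    (A ++ y :: B).dropWhile (· ≠ y) = y :: B := by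
  rw [dropWhile_append_of_pos (by grind)]
  simp

variable [LinearOrder α] {x d : α}

theorem headD_append_lt {m B : List α} (hm : m ≠ []) (hmx : ∀ z ∈ m, z < x) :
    (m ++ B).headD d < x := by
  obtain ⟨a, m, rfl⟩ := exists_cons_of_ne_nil hm
  exact hmx a (by simp)

theorem takeWhile_lt_eq_nil {L : List α} (h : x < L.headD d) : L.takeWhile (· < x) = [] := by
  cases L <;> simp_all [le_of_lt]

theorem dropWhile_lt_eq_self {L : List α} (h : x < L.headD d) : L.dropWhile (· < x) = L := by
  cases L <;> simp_all [le_of_lt]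

theorem lt_headD_dropWhile_lt {L : List α} (hxL : x ∉ L) (hxd : x < d) :
    x < (L.dropWhile (· < x)).headD d := by
  rcases h : L.dropWhile (· < x) with _ | ⟨b, t⟩
  · exact hxd
  · have hb := head?_dropWhile_not (· < x) L
    have hbL : b ∈ L := (dropWhile_sublist _).subset (h ▸ mem_cons_self)
    simp only [h, head?_cons, decide_eq_false_iff_not, not_lt] at hb
    exact lt_of_le_of_ne hb (by rintro rfl; exact hxL hbL)

end List

-- The neighbours of the letter `y` in the bordered word `(n+1) w (n+1)`, as `prev`/`next` in `phi`.
def leftNeighbor (n : ℕ) (w : List ℕ) (y : ℕ) : ℕ := (w.takeWhile (· ≠ y)).getLastD (n + 1)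

def rightNeighbor (n : ℕ) (w : List ℕ) (y : ℕ) : ℕ := (w.dropWhile (· ≠ y)).tail.headD (n + 1)

section Neighbors

variable {n y : ℕ} {w A B : List ℕ}

theorem leftNeighbor_append_cons (hy : y ∉ A) :
    leftNeighbor n (A ++ y :: B) y = A.getLastD (n + 1) := by
  rw [leftNeighbor, List.takeWhile_ne_append_cons hy]

theorem rightNeighbor_append_cons (hy : y ∉ A) :
    rightNeighbor n (A ++ y :: B) y = B.headD (n + 1) := by
  rw [rightNeighbor, List.dropWhile_ne_append_cons hy, List.tail_cons]

theorem rightNeighbor_of_eq {P S : List ℕ} (hw : w.Nodup) (h : w = P ++ y :: S) :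
    rightNeighbor n w y = S.headD (n + 1) := by
  subst h
  exact rightNeighbor_append_cons (List.notMem_of_nodup_append_cons hw).1

theorem leftNeighbor_reverse (hw : w.Nodup) (hy : y ∈ w) :
    leftNeighbor n w.reverse y = rightNeighbor n w y := by
  obtain ⟨A, B, rfl⟩ := List.append_of_mem hy
  have hyAB := List.notMem_of_nodup_append_cons hw
  rw [rightNeighbor_append_cons hyAB.1, List.reverse_append, List.reverse_cons, List.append_assoc,
    List.singleton_append, leftNeighbor_append_cons (by simpa using hyAB.2)]
  simp [List.getLastD_eq_getLast?]

theorem rightNeighbor_reverse (hw : w.Nodup) (hy : y ∈ w) :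
    rightNeighbor n w.reverse y = leftNeighbor n w y := by
  simpa using
    (leftNeighbor_reverse (n := n) (List.nodup_reverse.mpr hw) (List.mem_reverse.mpr hy)).symm

theorem leftNeighbor_ne (hw : w.Nodup) (hy : y ∈ w) (hyn : y ≤ n) : leftNeighbor n w y ≠ y := by
  obtain ⟨A, B, rfl⟩ := List.append_of_mem hy
  have hyA := (List.notMem_of_nodup_append_cons hw).1
  rw [leftNeighbor_append_cons hyA]
  rcases A.eq_nil_or_concat with rfl | ⟨A, a, rfl⟩
  · rw [List.getLastD_nil]
    omega
  · simp only [List.concat_eq_append, List.getLastD_concat]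
    rintro rfl
    simp at hyA

end Neighbors

section Positions

variable {n y : ℕ} {w A B : List ℕ}

theorem ext_append_cons (hy : y ∉ A) :
    ext n (A ++ y :: B) A.length = leftNeighbor n (A ++ y :: B) y ∧
      ext n (A ++ y :: B) (A.length + 1) = y ∧
      ext n (A ++ y :: B) (A.length + 1 + 1) = rightNeighbor n (A ++ y :: B) y := by
  rw [leftNeighbor_append_cons hy, rightNeighbor_append_cons hy]
  refine ⟨?_, ?_, ?_⟩
  · rcases A.eq_nil_or_concat with rfl | ⟨A, a, rfl⟩
    · rfl
    · simp [ext, List.getD_eq_getElem?_getD]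
  · simp [ext, List.getD_eq_getElem?_getD]
  · cases B <;> simp [ext, List.getD_eq_getElem?_getD]

theorem ext_getElem (hw : w.Nodup) {j : ℕ} (hj : j < w.length) :
    ext n w j = leftNeighbor n w w[j] ∧ ext n w (j + 1) = w[j] ∧
      ext n w (j + 1 + 1) = rightNeighbor n w w[j] := by
  have hdec : w = w.take j ++ w[j] :: w.drop (j + 1) := by simp
  rw [hdec] at hw
  have := ext_append_cons (n := n) (B := w.drop (j + 1)) (List.notMem_of_nodup_append_cons hw).1
  rwa [← hdec, List.length_take_of_le hj.le] at this

theorem nodup_of_perm_range' (hw : w.Perm (List.range' 1 n)) : w.Nodup :=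
  hw.nodup_iff.mpr List.nodup_range'

theorem mem_iff_of_perm_range' (hw : w.Perm (List.range' 1 n)) :
    y ∈ w ↔ y ∈ Finset.Icc 1 n := by
  rw [hw.mem_iff, List.mem_range'_1, Finset.mem_Icc]
  omega

theorem card_filter_ext_eq_card_filter_neighbors (hw : w.Perm (List.range' 1 n))
    (p : ℕ → ℕ → ℕ → Prop) [∀ a b c, Decidable (p a b c)] :
    #{i ∈ Finset.Icc 1 n | p (ext n w (i - 1)) (ext n w i) (ext n w (i + 1))} =
      #{y ∈ Finset.Icc 1 n | p (leftNeighbor n w y) y (rightNeighbor n w y)} := by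
  have hnd := nodup_of_perm_range' hw
  have hlen : w.length = n := by simpa using hw.length_eq
  apply Finset.card_nbij' (fun i => ext n w i) (fun y => w.idxOf y + 1)
  · intro i hi
    simp only [Finset.coe_filter, Finset.mem_Icc, Set.mem_ofPred_eq] at hi ⊢
    obtain ⟨e₀, e₁, e₂⟩ := ext_getElem (n := n) hnd (j := i - 1) (by omega)
    rw [Nat.sub_add_cancel hi.1.1] at *
    rw [e₁, ← e₀, ← e₂, ← e₁]
    refine ⟨?_, hi.2⟩
    rw [← Finset.mem_Icc, ← mem_iff_of_perm_range' hw, e₁]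
    exact List.getElem_mem _
  · intro y hy
    simp only [Finset.coe_filter, Finset.mem_Icc, Set.mem_ofPred_eq] at hy ⊢
    have hyw : y ∈ w := (mem_iff_of_perm_range' hw).mpr (Finset.mem_Icc.mpr hy.1)
    have hj := List.idxOf_lt_length_of_mem hyw
    obtain ⟨e₀, e₁, e₂⟩ := ext_getElem (n := n) hnd hj
    simp only [List.getElem_idxOf, Nat.add_sub_cancel] at e₀ e₁ e₂ ⊢
    rw [e₁, e₀, e₂]
    exact ⟨by omega, hy.2⟩
  · intro i hi
    simp only [Finset.coe_filter, Finset.mem_Icc, Set.mem_ofPred_eq] at hi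
    have hj : i - 1 < w.length := by omega
    obtain ⟨-, e₁, -⟩ := ext_getElem (n := n) hnd hj
    rw [Nat.sub_add_cancel hi.1.1] at e₁
    dsimp only
    rw [e₁, List.Nodup.idxOf_getElem hnd]
    omega
  · intro y hy
    simp only [Finset.coe_filter, Finset.mem_Icc, Set.mem_ofPred_eq] at hy
    have hyw : y ∈ w := (mem_iff_of_perm_range' hw).mpr (Finset.mem_Icc.mpr hy.1)
    obtain ⟨-, e₁, -⟩ := ext_getElem (n := n) hnd (List.idxOf_lt_length_of_mem hyw)
    simpa using e₁

end Positions

theorem card_filter_Icc_sub_one_eq {d : ℕ → Prop} [DecidablePred d] {k : ℕ} (h₀ : d 0)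
    (hk : ¬ d (k + 1)) :
    #{i ∈ Finset.Icc 1 (k + 1) | d (i - 1)} = #{i ∈ Finset.Icc 1 (k + 1) | d i} + 1 := by
  simp only [Finset.card_filter]
  rw [← Finset.Ico_add_one_right_eq_Icc, Finset.sum_Ico_eq_sum_range, Finset.sum_Ico_eq_sum_range,
    Nat.add_sub_cancel, Finset.sum_range_succ', Finset.sum_range_succ]
  simp [h₀, hk, Nat.add_comm 1]

-- `(true, true)`: peak, `(false, false)`: valley, `(true, false)`: double ascent,
-- `(false, true)`: double descent.
def shape (n : ℕ) (w : List ℕ) (y : ℕ) : Bool × Bool :=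
  (decide (leftNeighbor n w y < y), decide (rightNeighbor n w y < y))

def doubles (n : ℕ) (w : List ℕ) : Finset ℕ :=
  {y ∈ Finset.Icc 1 n | (shape n w y).1 ≠ (shape n w y).2}

def doubleDescents (n : ℕ) (w : List ℕ) : Finset ℕ :=
  {y ∈ Finset.Icc 1 n | shape n w y = (false, true)}

section Counting

variable {n : ℕ} {w : List ℕ}

theorem des_eq_card_shape (hw : w.Perm (List.range' 1 n)) :
    des n w = #{y ∈ Finset.Icc 1 n | (shape n w y).2} := by
  rw [des, card_filter_ext_eq_card_filter_neighbors hw (fun _ b c => c < b)]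
  simp [shape]

theorem peak_eq_card_shape (hw : w.Perm (List.range' 1 n)) :
    peak n w = #{y ∈ Finset.Icc 1 n | shape n w y = (true, true)} := by
  rw [peak, card_filter_ext_eq_card_filter_neighbors hw (fun a b c => a < b ∧ c < b)]
  simp [shape]

theorem des_eq_peak_add_card_doubleDescents (hw : w.Perm (List.range' 1 n)) :
    des n w = peak n w + #(doubleDescents n w) := by
  rw [des_eq_card_shape hw, peak_eq_card_shape hw, doubleDescents]
  simp only [Finset.card_filter, ← Finset.sum_add_distrib]
  refine Finset.sum_congr rfl fun y _ => ?_
  rcases shape n w y with ⟨_ | _, _ | _⟩ <;> rfl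

-- Besides the descents of `des`, this counts the descent `a₀ = n + 1 > a₁` at the left border.
theorem card_filter_shape_fst_eq_false (hw : w.Perm (List.range' 1 n)) (hn : 1 ≤ n) :
    #{y ∈ Finset.Icc 1 n | (shape n w y).1 = false} = des n w + 1 := by
  have hnd := nodup_of_perm_range' hw
  have hlen : w.length = n := by simpa using hw.length_eq
  calc #{y ∈ Finset.Icc 1 n | (shape n w y).1 = false}
      = #{y ∈ Finset.Icc 1 n | y < leftNeighbor n w y} := by
        congr 1
        refine Finset.filter_congr fun y hy => ?_
        have := leftNeighbor_ne (n := n) hnd ((mem_iff_of_perm_range' hw).mpr hy)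
          (Finset.mem_Icc.mp hy).2
        simp only [shape, decide_eq_false_iff_not, not_lt]
        omega
    _ = #{i ∈ Finset.Icc 1 n | ext n w i < ext n w (i - 1)} :=
        (card_filter_ext_eq_card_filter_neighbors hw (fun a b _ => b < a)).symm
    _ = des n w + 1 := by
        obtain ⟨k, rfl⟩ : ∃ k, n = k + 1 := ⟨n - 1, by omega⟩
        have hle : ∀ j (hj : j < w.length), w[j] ≤ k + 1 := fun j hj =>
          (Finset.mem_Icc.mp ((mem_iff_of_perm_range' hw).mp (List.getElem_mem hj))).2
        have h₀ : ext (k + 1) w 1 < ext (k + 1) w 0 := by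
          rw [(ext_getElem hnd (j := 0) (by omega)).2.1]
          exact Nat.lt_succ_of_le (hle 0 _)
        have hk : ¬ ext (k + 1) w (k + 1 + 1) < ext (k + 1) w (k + 1) := by
          rw [(ext_getElem hnd (j := k) (by omega)).2.1]
          have : ext (k + 1) w (k + 1 + 1) = k + 1 + 1 := by
            simp [ext, List.getD_eq_getElem?_getD, hlen]
          have := hle k (by omega)
          omega
        rw [des, ← card_filter_Icc_sub_one_eq h₀ hk]
        congr 1
        refine Finset.filter_congr fun i hi => ?_
        rw [Nat.sub_add_cancel (Finset.mem_Icc.mp hi).1]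

theorem two_mul_peak_add_card_doubles (hw : w.Perm (List.range' 1 n)) :
    2 * peak n w + #(doubles n w) = n - 1 := by
  rcases Nat.eq_zero_or_pos n with rfl | hn
  · simp [peak, doubles]
  have hsum : 2 * peak n w + #(doubles n w) + #{y ∈ Finset.Icc 1 n | (shape n w y).1 = false} =
      #(Finset.Icc 1 n) + des n w := by
    rw [peak_eq_card_shape hw, des_eq_card_shape hw, doubles,
      Finset.card_eq_sum_ones (Finset.Icc 1 n)]
    simp only [Finset.card_filter, Finset.mul_sum, ← Finset.sum_add_distrib]
    -- letter by letter: `[double] + 2 [peak] + [larger left neighbour] = 1 + [smaller right one]`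
    refine Finset.sum_congr rfl fun y _ => ?_
    rcases shape n w y with ⟨_ | _, _ | _⟩ <;> rfl
  have := card_filter_shape_fst_eq_false hw hn
  rw [Nat.card_Icc] at hsum
  omega

end Counting

theorem phi_append_cons {n x : ℕ} {A B : List ℕ} (hx : x ∉ A) :
    phi n x (A ++ x :: B) =
      if x < A.getLastD (n + 1) ∧ B.headD (n + 1) < x then
        A ++ B.takeWhile (· < x) ++ x :: B.dropWhile (· < x)
      else if A.getLastD (n + 1) < x ∧ x < B.headD (n + 1) then
        (A.reverse.dropWhile (· < x)).reverse ++ x :: ((A.reverse.takeWhile (· < x)).reverse ++ B)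
      else A ++ x :: B := by
  unfold phi
  rw [List.takeWhile_ne_append_cons hx, List.dropWhile_ne_append_cons hx, List.tail_cons]

theorem shape_reverse {n y : ℕ} {w : List ℕ} (hw : w.Nodup) (hy : y ∈ w) :
    shape n w.reverse y = (shape n w y).swap := by
  simp [shape, leftNeighbor_reverse hw hy, rightNeighbor_reverse hw hy]

-- The double descent `x` of `u` hops right across the run `m` and is a double ascent of `v`.
def IsHop (n x : ℕ) (u v : List ℕ) : Prop :=
  ∃ A m B : List ℕ, u = A ++ x :: (m ++ B) ∧ v = A ++ m ++ x :: B ∧ m ≠ [] ∧ (∀ z ∈ m, z < x) ∧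
    x < A.getLastD (n + 1) ∧ x < B.headD (n + 1)

namespace IsHop

variable {n x y : ℕ} {u v : List ℕ}

theorem mem_left (h : IsHop n x u v) : x ∈ u := by
  obtain ⟨A, m, B, rfl, -⟩ := h
  simp

theorem perm (h : IsHop n x u v) : u.Perm v := by
  obtain ⟨A, m, B, rfl, rfl, -⟩ := h
  simpa using List.perm_middle.symm.append_left A

theorem reverse (h : IsHop n x u v) : IsHop n x v.reverse u.reverse := by
  obtain ⟨A, m, B, rfl, rfl, hm, hmx, hA, hB⟩ := h
  refine ⟨B.reverse, m.reverse, A.reverse, by simp, by simp, by simpa using hm,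
    by simpa using hmx, ?_, ?_⟩
  · simpa [List.getLastD_eq_getLast?, List.headD_eq_head?] using hB
  · simpa [List.getLastD_eq_getLast?, List.headD_eq_head?] using hA

theorem phi_left (h : IsHop n x u v) (hu : u.Nodup) : phi n x u = v := by
  obtain ⟨A, m, B, rfl, rfl, hm, hmx, hA, hB⟩ := h
  have hmB : (m ++ B).headD (n + 1) < x := List.headD_append_lt hm hmx
  have hmx' : ∀ z ∈ m, decide (z < x) = true := by simpa using hmx
  rw [phi_append_cons (List.notMem_of_nodup_append_cons hu).1, if_pos ⟨hA, hmB⟩,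
    List.takeWhile_append_of_pos hmx', List.dropWhile_append_of_pos hmx',
    List.takeWhile_lt_eq_nil hB, List.dropWhile_lt_eq_self hB, List.append_nil]

theorem phi_right (h : IsHop n x u v) (hu : u.Nodup) : phi n x v = u := by
  obtain ⟨A, m, B, rfl, rfl, hm, hmx, hA, hB⟩ := h
  have hxA := (List.notMem_of_nodup_append_cons hu).1
  have hxm : x ∉ m := fun h => (hmx x h).false
  have hAm : (A ++ m).getLastD (n + 1) < x := by
    obtain rfl | ⟨m, a, rfl⟩ := m.eq_nil_or_concat
    · exact absurd rfl hm
    · simpa [← List.append_assoc] using hmx a (by simp)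
  have hmx' : ∀ z ∈ m.reverse, decide (z < x) = true := by simpa using hmx
  have hA' : x < A.reverse.headD (n + 1) := by
    simpa [List.getLastD_eq_getLast?, List.headD_eq_head?] using hA
  rw [phi_append_cons (by simp [hxA, hxm]), if_neg (by omega), if_pos ⟨hAm, hB⟩,
    List.reverse_append, List.takeWhile_append_of_pos hmx', List.dropWhile_append_of_pos hmx',
    List.takeWhile_lt_eq_nil hA', List.dropWhile_lt_eq_self hA']
  simp

theorem shape_left (h : IsHop n x u v) (hu : u.Nodup) : shape n u x = (false, true) := by
  obtain ⟨A, m, B, rfl, rfl, hm, hmx, hA, -⟩ := h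
  have hxA := (List.notMem_of_nodup_append_cons hu).1
  simp only [shape, leftNeighbor_append_cons hxA, rightNeighbor_append_cons hxA,
    decide_eq_true (List.headD_append_lt hm hmx), decide_eq_false hA.not_gt]

theorem shape_right (h : IsHop n x u v) (hu : u.Nodup) : shape n v x = (true, false) := by
  have hv := h.perm.nodup_iff.mp hu
  have := h.reverse.shape_left (List.nodup_reverse.mpr hv)
  rw [shape_reverse hv (h.perm.mem_iff.mp (h.mem_left))] at this
  simpa using congrArg Prod.swap this

theorem rightNeighbor_lt_iff (h : IsHop n x u v) (hu : u.Nodup) (hy : y ∈ u) (hyx : y ≠ x) :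
    rightNeighbor n v y < y ↔ rightNeighbor n u y < y := by
  have hv := h.perm.nodup_iff.mp hu
  obtain ⟨A, m, B, rfl, rfl, hm, hmx, hA, hB⟩ := h
  have hmB : ∀ {S : List ℕ}, (m ++ S).headD (n + 1) < x := List.headD_append_lt hm hmx
  simp only [List.mem_append, List.mem_cons, hyx, false_or] at hy
  -- the right neighbour of `y` changes only when `y` ends `A` or `m`, and then not its side
  rcases hy with hy | hy | hy
  · obtain ⟨A₁, A₂, rfl⟩ := List.append_of_mem hy
    rw [rightNeighbor_of_eq hu (P := A₁) (S := A₂ ++ x :: (m ++ B)) (by simp),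
      rightNeighbor_of_eq hv (P := A₁) (S := A₂ ++ m ++ x :: B) (by simp)]
    rcases A₂ with _ | ⟨a, A₂⟩
    · have hxy : x < y := by simpa using hA
      have := hmB (S := x :: B)
      simp only [List.nil_append, List.headD_cons] at this ⊢
      omega
    · rfl
  · obtain ⟨m₁, m₂, rfl⟩ := List.append_of_mem hy
    have hyx := hmx y (by simp)
    rw [rightNeighbor_of_eq hu (P := A ++ x :: m₁) (S := m₂ ++ B) (by simp),
      rightNeighbor_of_eq hv (P := A ++ m₁) (S := m₂ ++ x :: B) (by simp)]
    rcases m₂ with _ | ⟨a, m₂⟩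
    · simp only [List.nil_append, List.headD_cons]
      omega
    · rfl
  · obtain ⟨B₁, B₂, rfl⟩ := List.append_of_mem hy
    rw [rightNeighbor_of_eq hu (P := A ++ x :: (m ++ B₁)) (S := B₂) (by simp),
      rightNeighbor_of_eq hv (P := A ++ m ++ x :: B₁) (S := B₂) (by simp)]

theorem shape_eq (h : IsHop n x u v) (hu : u.Nodup) (hy : y ∈ u) (hyx : y ≠ x) :
    shape n v y = shape n u y := by
  have hv := h.perm.nodup_iff.mp hu
  have hyv := h.perm.mem_iff.mp hy
  have hleft := h.reverse.rightNeighbor_lt_iff (List.nodup_reverse.mpr hv)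
    (List.mem_reverse.mpr hyv) hyx
  -- left neighbours are right neighbours in the reversed hop
  rw [rightNeighbor_reverse hu hy, rightNeighbor_reverse hv hyv] at hleft
  simp [shape, h.rightNeighbor_lt_iff hu hy hyx, hleft]

end IsHop

theorem isHop_phi_of_shape_eq {n x : ℕ} {w : List ℕ} (hw : w.Nodup) (hx : x ∈ w) (hxn : x ≤ n)
    (hs : shape n w x = (false, true)) : IsHop n x w (phi n x w) := by
  obtain ⟨A, R, rfl⟩ := List.append_of_mem hx
  obtain ⟨hxA, hxR⟩ := List.notMem_of_nodup_append_cons hw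
  have hne := leftNeighbor_ne (n := n) hw hx hxn
  simp only [shape, Prod.mk.injEq, decide_eq_false_iff_not, not_lt, decide_eq_true_eq] at hs
  rw [leftNeighbor_append_cons hxA] at hs hne
  rw [rightNeighbor_append_cons hxA] at hs
  have hm : R.takeWhile (· < x) ≠ [] := by
    rcases R with _ | ⟨r, R⟩
    · simp only [List.headD_nil] at hs
      omega
    · simp_all
  have hhop : IsHop n x (A ++ x :: R) (A ++ R.takeWhile (· < x) ++ x :: R.dropWhile (· < x)) :=
    ⟨A, _, _, by rw [List.takeWhile_append_dropWhile], rfl, hm,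
      fun z hz => by simpa using List.mem_takeWhile_imp hz, lt_of_le_of_ne hs.1 hne.symm,
      List.lt_headD_dropWhile_lt hxR (by omega)⟩
  rwa [hhop.phi_left hw]

section SingleHop

variable {n x : ℕ} {w : List ℕ}

theorem mem_doubles {y : ℕ} :
    y ∈ doubles n w ↔ y ∈ Finset.Icc 1 n ∧ (shape n w y).1 ≠ (shape n w y).2 := by
  simp [doubles]

theorem isHop_phi_or_of_mem_doubles (hw : w.Perm (List.range' 1 n)) (hx : x ∈ doubles n w) :
    IsHop n x w (phi n x w) ∨ IsHop n x (phi n x w) w := by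
  have hnd := nodup_of_perm_range' hw
  obtain ⟨hxI, hs⟩ := mem_doubles.mp hx
  have hxw := (mem_iff_of_perm_range' hw).mpr hxI
  have hxn := (Finset.mem_Icc.mp hxI).2
  rcases hsx : shape n w x with ⟨_ | _, _ | _⟩ <;> rw [hsx] at hs <;>
    simp only [ne_eq, not_true] at hs
  · exact .inl (isHop_phi_of_shape_eq hnd hxw hxn hsx)
  · -- a double ascent of `w` is a double descent of `w.reverse`
    have hrev := (isHop_phi_of_shape_eq (List.nodup_reverse.mpr hnd) (List.mem_reverse.mpr hxw)
      hxn (by rw [shape_reverse hnd hxw, hsx]; rfl)).reverse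
    rw [List.reverse_reverse] at hrev
    rw [← hrev.phi_right (hrev.perm.nodup_iff.mpr hnd)] at hrev
    exact .inr hrev

theorem perm_phi_of_mem_doubles (hw : w.Perm (List.range' 1 n)) (hx : x ∈ doubles n w) :
    (phi n x w).Perm (List.range' 1 n) := by
  rcases isHop_phi_or_of_mem_doubles hw hx with h | h
  · exact h.perm.symm.trans hw
  · exact h.perm.trans hw

theorem phi_phi_of_mem_doubles (hw : w.Perm (List.range' 1 n)) (hx : x ∈ doubles n w) :
    phi n x (phi n x w) = w := by
  have hnd := nodup_of_perm_range' hw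
  rcases isHop_phi_or_of_mem_doubles hw hx with h | h
  · rw [h.phi_right hnd]
  · rw [h.phi_left (h.perm.nodup_iff.mpr hnd)]

theorem shape_phi_self_of_mem_doubles (hw : w.Perm (List.range' 1 n)) (hx : x ∈ doubles n w) :
    shape n (phi n x w) x = (shape n w x).swap := by
  have hnd := nodup_of_perm_range' hw
  rcases isHop_phi_or_of_mem_doubles hw hx with h | h
  · rw [h.shape_left hnd, h.shape_right hnd]; rfl
  · have hnd' := h.perm.nodup_iff.mpr hnd
    rw [h.shape_left hnd', h.shape_right hnd']; rfl

theorem shape_phi_of_mem_doubles (hw : w.Perm (List.range' 1 n)) (hx : x ∈ doubles n w)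
    {y : ℕ} (hy : y ∈ w) (hyx : y ≠ x) : shape n (phi n x w) y = shape n w y := by
  have hnd := nodup_of_perm_range' hw
  rcases isHop_phi_or_of_mem_doubles hw hx with h | h
  · exact h.shape_eq hnd hy hyx
  · exact (h.shape_eq (h.perm.nodup_iff.mpr hnd) (h.perm.mem_iff.mpr hy) hyx).symm

end SingleHop

-- The last letter of `L` hops first.
def hops (n : ℕ) (L w : List ℕ) : List ℕ := L.foldr (phi n) w

section Hops

variable {n : ℕ} {L w : List ℕ}

theorem hops_mem {T : Finset (List ℕ)} (hinv : ∀ σ ∈ T, ∀ x ∈ Finset.Icc 1 n, phi n x σ ∈ T)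
    (hL : ∀ y ∈ L, y ∈ Finset.Icc 1 n) (hw : w ∈ T) : hops n L w ∈ T := by
  induction L with
  | nil => exact hw
  | cons y L ih => exact hinv _ (ih fun z hz => hL z (by simp [hz])) y (hL y (by simp))

theorem perm_hops_and_shape_hops (hw : w.Perm (List.range' 1 n)) (hL : L.Nodup)
    (hLw : ∀ y ∈ L, y ∈ doubles n w) :
    (hops n L w).Perm (List.range' 1 n) ∧ ∀ y ∈ Finset.Icc 1 n,
      shape n (hops n L w) y = if y ∈ L then (shape n w y).swap else shape n w y := by
  induction L with
  | nil => simp [hops, hw]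
  | cons x L ih =>
    obtain ⟨hxL, hL⟩ := List.nodup_cons.mp hL
    obtain ⟨hv, hshape⟩ := ih hL fun y hy => hLw y (by simp [hy])
    have hxw := hLw x (by simp)
    have hx : x ∈ doubles n (hops n L w) := by
      rw [mem_doubles, hshape x (mem_doubles.mp hxw).1, if_neg hxL]
      exact mem_doubles.mp hxw
    refine ⟨perm_phi_of_mem_doubles hv hx, fun y hy => ?_⟩
    change shape n (phi n x (hops n L w)) y = _
    by_cases hyx : y = x
    · subst hyx
      rw [shape_phi_self_of_mem_doubles hv hx, hshape y hy, if_neg hxL, if_pos (by simp)]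
    · rw [shape_phi_of_mem_doubles hv hx ((mem_iff_of_perm_range' hv).mpr hy) hyx, hshape y hy]
      simp [hyx]

theorem doubles_hops (hw : w.Perm (List.range' 1 n)) (hL : L.Nodup)
    (hLw : ∀ y ∈ L, y ∈ doubles n w) : doubles n (hops n L w) = doubles n w := by
  ext y
  simp only [mem_doubles, and_congr_right_iff]
  intro hy
  rw [(perm_hops_and_shape_hops hw hL hLw).2 y hy]
  split_ifs <;> simp [eq_comm]

theorem peak_hops (hw : w.Perm (List.range' 1 n)) (hL : L.Nodup)
    (hLw : ∀ y ∈ L, y ∈ doubles n w) : peak n (hops n L w) = peak n w := by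
  obtain ⟨hv, hshape⟩ := perm_hops_and_shape_hops hw hL hLw
  rw [peak_eq_card_shape hv, peak_eq_card_shape hw]
  refine congrArg _ (Finset.filter_congr fun y hy => ?_)
  rw [hshape y hy]
  split_ifs with hyL
  · have := (mem_doubles.mp (hLw y hyL)).2
    generalize shape n w y = s at this ⊢
    rcases s with ⟨_ | _, _ | _⟩ <;> simp_all
  · rfl

theorem doubleDescents_hops (hw : w.Perm (List.range' 1 n)) (hL : L.Nodup)
    (hLw : ∀ y ∈ L, y ∈ doubles n w) :
    doubleDescents n (hops n L w) = symmDiff (doubleDescents n w) L.toFinset := by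
  obtain ⟨hv, hshape⟩ := perm_hops_and_shape_hops hw hL hLw
  ext y
  simp only [doubleDescents, Finset.mem_symmDiff, Finset.mem_filter, List.mem_toFinset]
  by_cases hy : y ∈ Finset.Icc 1 n
  · rw [hshape y hy]
    split_ifs with hyL
    · have := (mem_doubles.mp (hLw y hyL)).2
      generalize shape n w y = s at this ⊢
      rcases s with ⟨_ | _, _ | _⟩ <;> simp_all
    · simp [hy, hyL]
  · have : y ∉ L := fun hyL => hy (mem_doubles.mp (hLw y hyL)).1
    simp [hy, this]

theorem des_hops (hw : w.Perm (List.range' 1 n)) (hL : L.Nodup)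
    (hLw : ∀ y ∈ L, y ∈ doubles n w) :
    des n (hops n L w) = peak n w + #(symmDiff (doubleDescents n w) L.toFinset) := by
  rw [des_eq_peak_add_card_doubleDescents (perm_hops_and_shape_hops hw hL hLw).1,
    peak_hops hw hL hLw, doubleDescents_hops hw hL hLw]

theorem hops_reverse_hops (hw : w.Perm (List.range' 1 n)) (hL : L.Nodup)
    (hLw : ∀ y ∈ L, y ∈ doubles n w) : hops n L.reverse (hops n L w) = w := by
  induction L with
  | nil => rfl
  | cons x L ih =>
    obtain ⟨hxL, hL⟩ := List.nodup_cons.mp hL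
    have hLw' : ∀ y ∈ L, y ∈ doubles n w := fun y hy => hLw y (by simp [hy])
    have hx : x ∈ doubles n (hops n L w) := (doubles_hops hw hL hLw').symm ▸ hLw x (by simp)
    rw [List.reverse_cons]
    show hops n (L.reverse ++ [x]) (phi n x (hops n L w)) = w
    rw [hops, List.foldr_append, List.foldr_cons, List.foldr_nil,
      phi_phi_of_mem_doubles (perm_hops_and_shape_hops hw hL hLw').1 hx]
    exact ih hL hLw'

end Hops

theorem sum_pow_des_hops {R : Type*} [CommSemiring R] {n : ℕ} {w : List ℕ}
    (hw : w.Perm (List.range' 1 n)) (x : R) :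
    ∑ S ∈ (doubles n w).powerset, x ^ des n (hops n S.toList w) =
      x ^ peak n w * (1 + x) ^ #(doubles n w) := by
  have hDD : doubleDescents n w ⊆ doubles n w := fun y hy => by
    simp only [doubleDescents, Finset.mem_filter] at hy
    exact mem_doubles.mpr ⟨hy.1, by simp [hy.2]⟩
  calc ∑ S ∈ (doubles n w).powerset, x ^ des n (hops n S.toList w)
      = ∑ S ∈ (doubles n w).powerset, x ^ peak n w * x ^ #(symmDiff (doubleDescents n w) S) := by
        refine Finset.sum_congr rfl fun S hS => ?_
        rw [des_hops hw S.nodup_toList fun y hy =>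
          Finset.mem_powerset.mp hS (Finset.mem_toList.mp hy), Finset.toList_toFinset, pow_add]
    _ = x ^ peak n w * ∑ S ∈ (doubles n w).powerset, x ^ #S := by
        rw [← Finset.mul_sum]
        congr 1
        refine Finset.sum_nbij' (symmDiff (doubleDescents n w)) (symmDiff (doubleDescents n w))
          ?_ ?_ (fun _ _ => symmDiff_symmDiff_cancel_left _ _)
          (fun _ _ => symmDiff_symmDiff_cancel_left _ _) (fun _ _ => rfl) <;>
        intro S hS <;>
        simpa using (symmDiff_le (hDD.trans Finset.subset_union_right)
          ((Finset.mem_powerset.mp hS).trans Finset.subset_union_right) : _ ⊆ doubles n w)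
    _ = x ^ peak n w * (1 + x) ^ #(doubles n w) := by
        simpa [add_comm] using
          congrArg (x ^ peak n w * ·) (Finset.sum_pow_mul_eq_add_pow x 1 (doubles n w))

theorem sum_sum_hops {M : Type*} [AddCommMonoid M] {n : ℕ} {T : Finset (List ℕ)}
    (hperm : ∀ σ ∈ T, σ.Perm (List.range' 1 n))
    (hinv : ∀ σ ∈ T, ∀ x ∈ Finset.Icc 1 n, phi n x σ ∈ T) (f : List ℕ → M) :
    ∑ σ ∈ T, ∑ S ∈ (doubles n σ).powerset, f (hops n S.toList σ) =
      ∑ σ ∈ T, 2 ^ #(doubles n σ) • f σ := by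
  have hsub : ∀ {σ S}, S ∈ (doubles n σ).powerset → ∀ L : List ℕ, L.Perm S.toList →
      L.Nodup ∧ ∀ y ∈ L, y ∈ doubles n σ := fun {σ S} hS L hL =>
    ⟨hL.nodup_iff.mpr (Finset.nodup_toList S), fun y hy =>
      Finset.mem_powerset.mp hS (Finset.mem_toList.mp (hL.mem_iff.mp hy))⟩
  have hmaps : ∀ {σ S} (L : List ℕ), σ ∈ T → S ∈ (doubles n σ).powerset → L.Perm S.toList →
      hops n L σ ∈ T ∧ S ∈ (doubles n (hops n L σ)).powerset := fun {σ S} L hσ hS hL =>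
    ⟨hops_mem hinv (fun y hy => (mem_doubles.mp ((hsub hS L hL).2 y hy)).1) hσ,
      by rwa [doubles_hops (hperm σ hσ) (hsub hS L hL).1 (hsub hS L hL).2]⟩
  simp_rw [← Finset.card_powerset, ← Finset.sum_const]
  rw [Finset.sum_sigma', Finset.sum_sigma']
  -- hopping along the reversed list undoes a hop sequence
  refine Finset.sum_nbij' (fun p => ⟨hops n p.2.toList p.1, p.2⟩)
    (fun p => ⟨hops n p.2.toList.reverse p.1, p.2⟩) ?_ ?_ ?_ ?_ (fun _ _ => rfl)
  · rintro ⟨σ, S⟩ h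
    simp only [Finset.mem_sigma] at h ⊢
    exact hmaps _ h.1 h.2 (List.Perm.refl _)
  · rintro ⟨σ, S⟩ h
    simp only [Finset.mem_sigma] at h ⊢
    exact hmaps _ h.1 h.2 (List.reverse_perm _)
  · rintro ⟨σ, S⟩ h
    simp only [Finset.mem_sigma] at h
    obtain ⟨hL, hLσ⟩ := hsub h.2 _ (List.Perm.refl _)
    simp [hops_reverse_hops (hperm σ h.1) hL hLσ]
  · rintro ⟨σ, S⟩ h
    simp only [Finset.mem_sigma] at h
    obtain ⟨hL, hLσ⟩ := hsub h.2 _ (List.reverse_perm _)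
    simpa using hops_reverse_hops (hperm σ h.1) hL hLσ

theorem descent_polynomial_gamma_nonneg_of_invariant
    (n : ℕ) (T : Finset (List ℕ))
    (hperm : ∀ σ ∈ T, σ.Perm (List.range' 1 n))
    (hinv : ∀ σ ∈ T, ∀ x ∈ Finset.Icc 1 n, phi n x σ ∈ T) (x : ℝ) :
    ∑ σ ∈ T, x ^ des n σ =
      ∑ i ∈ Finset.range ((n - 1) / 2 + 1),
        ((2 : ℝ) ^ (2 * i) / 2 ^ (n - 1) *
            (T.filter (fun σ => peak n σ = i)).card) *
          x ^ i * (1 + x) ^ (n - 1 - 2 * i) := by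
  have hcard : ∀ σ ∈ T, 2 * peak n σ + #(doubles n σ) = n - 1 :=
    fun σ hσ => two_mul_peak_add_card_doubles (hperm σ hσ)
  calc ∑ σ ∈ T, x ^ des n σ
      = ∑ σ ∈ T, 2 ^ #(doubles n σ) • (x ^ des n σ / 2 ^ #(doubles n σ)) := by
        simp [nsmul_eq_mul, mul_div_cancel₀]
    _ = ∑ σ ∈ T, ∑ S ∈ (doubles n σ).powerset,
          x ^ des n (hops n S.toList σ) / 2 ^ #(doubles n (hops n S.toList σ)) :=
        (sum_sum_hops hperm hinv _).symm
    _ = ∑ σ ∈ T, x ^ peak n σ * (1 + x) ^ (n - 1 - 2 * peak n σ) /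
          2 ^ (n - 1 - 2 * peak n σ) := by
        refine Finset.sum_congr rfl fun σ hσ => ?_
        have hdoubles : ∀ S ∈ (doubles n σ).powerset,
            doubles n (hops n S.toList σ) = doubles n σ := fun S hS =>
          doubles_hops (hperm σ hσ) (Finset.nodup_toList S)
            fun y hy => Finset.mem_powerset.mp hS (Finset.mem_toList.mp hy)
        rw [Finset.sum_congr rfl fun S hS => by rw [hdoubles S hS], ← Finset.sum_div,
          sum_pow_des_hops (hperm σ hσ), show #(doubles n σ) = n - 1 - 2 * peak n σ by
            have := hcard σ hσ; omega]
    _ = _ := by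
        rw [← Finset.sum_fiberwise_of_maps_to (g := peak n)
          (t := Finset.range ((n - 1) / 2 + 1))
          fun σ hσ => Finset.mem_range.mpr (by have := hcard σ hσ; omega)]
        refine Finset.sum_congr rfl fun i hi => ?_
        rw [Finset.sum_congr rfl fun σ hσ => by rw [(Finset.mem_filter.mp hσ).2],
          Finset.sum_const, nsmul_eq_mul,
          show (2 : ℝ) ^ (n - 1) = 2 ^ (2 * i) * 2 ^ (n - 1 - 2 * i) by
            rw [← pow_add]; congr 1; have := Finset.mem_range.mp hi; omega]
        field_simp
end

section
/- If Δ is a Boolean cell complex, then the f-polynomial of its barycentric subdivision equals E applied to the f-polynomial of Δ, where E is the linear operator on polynomials defined by E(binom(x,k)) = x^k; equivalently, E(x^n) = Σ_{k=1}^n k!·S(n,k)·x^k for n ≥ 1. -/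
/-!
A chain `F₁ < ⋯ < F_k` of nonempty faces is a chain `⊥ = F₀ < F₁ < ⋯ < F_k` ending at some face
`F`, and in the Boolean lattice `[⊥, F] ≅ 2^[r]` the chains from `⊥` to `F` of length `k`
correspond to the surjections `g : [r] → [k]`, via `F_j = g⁻¹ {0, …, j - 1}`. So the coefficient
of `x^k` on the left is `∑_F k! S(rk F, k)`. On the right, sorting the maps `[n] → [m]` by their
image gives `m^n = ∑_k k! S(n, k) binom(m, k)` for all `m : ℕ`, hence
`x^n = ∑_k k! S(n, k) binom(x, k)` as polynomials, which `E` sends to `∑_k k! S(n, k) x^k`.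
-/

open Polynomial Finset Function

abbrev StrictChain (P : Type*) [Preorder P] (k : ℕ) (a b : P) : Type _ :=
  {d : Fin (k + 1) → P // StrictMono d ∧ d 0 = a ∧ d (Fin.last k) = b}

namespace StrictChain

variable {P Q : Type*} [Preorder P] [Preorder Q] {k : ℕ}

def congr (e : P ≃o Q) (a b : P) : StrictChain P k a b ≃ StrictChain Q k (e a) (e b) :=
  Equiv.subtypeEquiv (Equiv.arrowCongr (Equiv.refl _) e.toEquiv) fun d => by
    simp [StrictMono, e.lt_iff_lt]

def toIcc {a b : P} (hab : a ≤ b) :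
    StrictChain P k a b ≃ StrictChain (Set.Icc a b) k ⟨a, Set.left_mem_Icc.2 hab⟩
      ⟨b, Set.right_mem_Icc.2 hab⟩ where
  toFun d := ⟨fun j => ⟨d.1 j, d.2.2.1.symm.trans_le (d.2.1.monotone (Fin.zero_le j)),
      (d.2.1.monotone (Fin.le_last j)).trans_eq d.2.2.2⟩,
    fun _ _ hij => d.2.1 hij, Subtype.ext d.2.2.1, Subtype.ext d.2.2.2⟩
  invFun c := ⟨fun j => c.1 j, fun _ _ hij => c.2.1 hij, congrArg Subtype.val c.2.2.1,
    congrArg Subtype.val c.2.2.2⟩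
  left_inv _ := rfl
  right_inv _ := rfl

end StrictChain

section BooleanChains

variable {α : Type*} [Fintype α] {k : ℕ}

def sublevelChain (g : α → Fin k) (j : Fin (k + 1)) : Finset α := {x | (g x).castSucc < j}

@[simp]
lemma mem_sublevelChain {g : α → Fin k} {j : Fin (k + 1)} {x : α} :
    x ∈ sublevelChain g j ↔ (g x).castSucc < j := by
  simp [sublevelChain]

lemma monotone_sublevelChain (g : α → Fin k) : Monotone (sublevelChain g) :=
  fun _ _ hij _ => by simpa using fun h => h.trans_le hij

lemma sublevelChain_zero (g : α → Fin k) : sublevelChain g 0 = ⊥ := by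
  ext x; simp

lemma sublevelChain_last (g : α → Fin k) : sublevelChain g (Fin.last k) = ⊤ := by
  ext x; simp [Fin.castSucc_lt_last]

lemma sublevelChain_injective : Injective (sublevelChain (α := α) (k := k)) := by
  intro g g' h
  funext x
  have hle (i : Fin k) : g x ≤ i ↔ g' x ≤ i := by
    simpa [Fin.castSucc_lt_succ_iff] using congrArg (x ∈ ·) (congrFun h i.succ)
  exact le_antisymm ((hle _).2 le_rfl) ((hle _).1 le_rfl)

lemma strictMono_sublevelChain_iff {g : α → Fin k} :
    StrictMono (sublevelChain g) ↔ Surjective g := by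
  have step (i : Fin k) :
      sublevelChain g i.castSucc < sublevelChain g i.succ ↔ ∃ x, g x = i := by
    rw [Finset.ssubset_iff_of_subset (monotone_sublevelChain g (Fin.castSucc_le_succ i))]
    simp [Fin.castSucc_lt_succ_iff, le_antisymm_iff]
  simp only [Fin.strictMono_iff_lt_succ, step, Surjective]

lemma exists_sublevelChain_eq {c : Fin (k + 1) → Finset α} (hc : Monotone c) (h0 : c 0 = ⊥)
    (hlast : c (Fin.last k) = ⊤) : ∃ g, sublevelChain g = c := by
  classical
  have hx (x : α) : ∃ i : Fin k, x ∈ c i.succ := by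
    have : ∃ j, x ∈ c j := ⟨Fin.last k, by simp [hlast]⟩
    simpa [Fin.exists_fin_succ, h0] using this
  -- `g x` is the step at which `x` enters the chain.
  refine ⟨fun x => Fin.find _ (hx x), funext fun j => ?_⟩
  ext x
  cases j using Fin.cases with
  | zero => simp [h0]
  | succ j =>
    rw [mem_sublevelChain, Fin.castSucc_lt_succ_iff, Fin.find_le_iff]
    exact ⟨fun ⟨i, hij, hi⟩ => hc (Fin.succ_le_succ_iff.2 hij) hi, fun h => ⟨j, le_rfl, h⟩⟩

theorem card_strictChain_finset :
    Nat.card (StrictChain (Finset α) k ⊥ ⊤) = Nat.card {g : α → Fin k // Surjective g} := by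
  refine (Nat.card_congr (Equiv.ofBijective (fun g => ⟨sublevelChain g.1,
    strictMono_sublevelChain_iff.2 g.2, sublevelChain_zero g.1, sublevelChain_last g.1⟩)
    ⟨fun g g' h => Subtype.ext (sublevelChain_injective (congrArg Subtype.val h)), ?_⟩)).symm
  rintro ⟨c, hc, h0, hlast⟩
  obtain ⟨g, rfl⟩ := exists_sublevelChain_eq hc.monotone h0 hlast
  exact ⟨⟨g, strictMono_sublevelChain_iff.1 hc⟩, rfl⟩

end BooleanChains

-- This is `k! S(n, k)`.
noncomputable def surjCount (n k : ℕ) : ℕ := Nat.card {g : Fin n → Fin k // Surjective g}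

lemma card_surjective_eq_surjCount {α β : Type*} [Fintype α] [Fintype β] :
    Nat.card {g : α → β // Surjective g} = surjCount (Fintype.card α) (Fintype.card β) :=
  Nat.card_congr <| Equiv.subtypeEquiv
    (Equiv.arrowCongr (Fintype.equivFin α) (Fintype.equivFin β)) fun _ =>
      ((Equiv.comp_surjective _ _).trans (Equiv.surjective_comp _ _)).symm

lemma surjCount_eq_zero_of_lt {n k : ℕ} (h : n < k) : surjCount n k = 0 := by
  rw [surjCount, Nat.card_eq_zero]
  refine .inl ⟨fun g => ?_⟩
  have := Fintype.card_le_of_surjective g.1 g.2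
  simp only [Fintype.card_fin] at this
  omega

def rangeEqEquivSurjective {α β : Type*} (s : Set β) :
    {f : α → β // Set.range f = s} ≃ {g : α → s // Surjective g} where
  toFun f := ⟨fun x => ⟨f.1 x, Set.range_subset_iff.1 f.2.subset x⟩, fun y => by
    obtain ⟨x, hx⟩ := f.2.symm.subset y.2
    exact ⟨x, Subtype.ext hx⟩⟩
  invFun g := ⟨Subtype.val ∘ g.1, by rw [Set.range_comp, g.2.range_eq, Set.image_univ,
    Subtype.range_coe]⟩
  left_inv _ := rfl
  right_inv _ := rfl

lemma Finset.sum_range_succ_eq_of_le {M : Type*} [AddCommMonoid M] {f : ℕ → M} {a b : ℕ}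
    (hab : a ≤ b) (hf : ∀ k, a < k → f k = 0) :
    ∑ k ∈ range (b + 1), f k = ∑ k ∈ range (a + 1), f k :=
  (sum_subset (range_subset_range.2 (by omega)) fun k _ hk => hf k (by simpa using hk)).symm

lemma pow_eq_sum_surjCount_mul_choose {n N : ℕ} (m : ℕ) (hn : n ≤ N) :
    m ^ n = ∑ k ∈ range (N + 1), surjCount n k * m.choose k := by
  classical
  have hfiber : (Fin n → Fin m) ≃ Σ s : Finset (Fin m), {g : Fin n → s // Surjective g} :=
    (Equiv.sigmaFiberEquiv fun f => univ.image f).symm.trans <|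
      Equiv.sigmaCongrRight fun s => (Equiv.subtypeEquivRight fun f => by
        simp [← coe_inj]).trans (rangeEqEquivSurjective _)
  have hvanish (k : ℕ) (hk : min m n < k) : surjCount n k * m.choose k = 0 := by
    rcases min_lt_iff.1 hk with hm | hn
    · rw [Nat.choose_eq_zero_of_lt hm, mul_zero]
    · rw [surjCount_eq_zero_of_lt hn, zero_mul]
  calc m ^ n = Nat.card (Fin n → Fin m) := by simp
    _ = ∑ s : Finset (Fin m), surjCount n #s := by
        rw [Nat.card_congr hfiber, Nat.card_sigma]
        simp only [card_surjective_eq_surjCount, Fintype.card_fin, Fintype.card_coe]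
    _ = ∑ k ∈ range (m + 1), surjCount n k * m.choose k := by
        simp [← powerset_univ, sum_powerset_apply_card, mul_comm]
    _ = ∑ k ∈ range (min m n + 1), surjCount n k * m.choose k :=
        sum_range_succ_eq_of_le (min_le_left m n) hvanish
    _ = _ := (sum_range_succ_eq_of_le ((min_le_right m n).trans hn) hvanish).symm

section BinomialBasis

variable (K : Type*) [Field K] [CharZero K]

noncomputable def binomialPoly (k : ℕ) : K[X] :=
  (k.factorial : K)⁻¹ • ∏ i ∈ range k, (X - C (i : K))

lemma eval_natCast_binomialPoly (m k : ℕ) : (binomialPoly K k).eval (m : K) = m.choose k := by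
  rw [binomialPoly, eval_smul, eval_prod]
  simp only [eval_sub, eval_X, eval_C]
  rw [← descPochhammer_eval_eq_prod_range, descPochhammer_eval_eq_descFactorial,
    Nat.descFactorial_eq_factorial_mul_choose, Nat.cast_mul, smul_eq_mul,
    inv_mul_cancel_left₀ (Nat.cast_ne_zero.2 k.factorial_ne_zero)]

lemma X_pow_eq_sum_surjCount_smul_binomialPoly {n N : ℕ} (hn : n ≤ N) :
    (X : K[X]) ^ n = ∑ k ∈ range (N + 1), (surjCount n k : K) • binomialPoly K k := by
  refine eq_of_infinite_eval_eq _ _ <|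
    Set.infinite_of_injective_forall_mem Nat.cast_injective fun m : ℕ => ?_
  simp only [Set.mem_ofPred_eq, eval_pow, eval_X, eval_finsetSum, eval_smul,
    eval_natCast_binomialPoly, smul_eq_mul]
  exact_mod_cast pow_eq_sum_surjCount_mul_choose m hn

end BinomialBasis

lemma le_card_of_equiv_finset {P : Type*} [Fintype P] {s : Set P} {r : ℕ}
    (e : s ≃ Finset (Fin r)) : r ≤ Fintype.card P :=
  calc r ≤ 2 ^ r := Nat.lt_two_pow_self.le
    _ = Nat.card s := by simp [Nat.card_congr e]
    _ ≤ Fintype.card P := by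
      simpa using Nat.card_le_card_of_injective (Subtype.val : s → P) Subtype.val_injective

section FacePoset

variable {P : Type*} [PartialOrder P] [OrderBot P]

def nonBotChainEquivSigma (k : ℕ) :
    {c : Fin k → P // StrictMono c ∧ ∀ i, c i ≠ ⊥} ≃ Σ F : P, StrictChain P k ⊥ F where
  toFun c := ⟨_, Fin.cons ⊥ c.1,
    Fin.strictMono_cons.2 ⟨fun j => bot_lt_iff_ne_bot.2 (c.2.2 j), c.2.1⟩, rfl, rfl⟩
  invFun d := ⟨Fin.tail d.2.1, by
    have hd := d.2.2.1
    rw [← Fin.cons_self_tail d.2.1, d.2.2.2.1, Fin.strictMono_cons] at hd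
    exact ⟨hd.2, fun j => (hd.1 j).ne'⟩⟩
  left_inv c := by simp
  right_inv := by
    rintro ⟨F, d, hd, h0, rfl⟩
    have hd : Fin.cons ⊥ (Fin.tail d) = d := h0 ▸ Fin.cons_self_tail d
    exact Sigma.subtype_ext (congrFun hd (Fin.last k)) hd

lemma card_strictChain_bot_eq_surjCount {F : P} {r : ℕ} (e : Set.Icc ⊥ F ≃o Finset (Fin r))
    (k : ℕ) : Nat.card (StrictChain P k ⊥ F) = surjCount r k := by
  have hbot : e ⟨⊥, Set.left_mem_Icc.2 bot_le⟩ = ⊥ := e.map_bot' (fun x => x.2.1) fun _ => bot_le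
  have htop : e ⟨F, Set.right_mem_Icc.2 bot_le⟩ = ⊤ := e.map_top' (fun x => x.2.2) fun _ => le_top
  rw [Nat.card_congr ((StrictChain.toIcc bot_le).trans (StrictChain.congr e _ _)), hbot,
    htop, card_strictChain_finset, card_surjective_eq_surjCount]
  simp

lemma card_nonBotChains_eq_sum_surjCount [Fintype P] {rk : P → ℕ}
    (hbool : ∀ F : P, Nonempty (Set.Icc ⊥ F ≃o Finset (Fin (rk F)))) (k : ℕ) :
    Nat.card {c : Fin k → P // StrictMono c ∧ ∀ i, c i ≠ ⊥} = ∑ F, surjCount (rk F) k := by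
  rw [Nat.card_congr (nonBotChainEquivSigma k), Nat.card_sigma]
  exact sum_congr rfl fun F _ => card_strictChain_bot_eq_surjCount (hbool F).some k

end FacePoset

/-- For a Boolean cell complex — modelled by its face poset `P`, a finite poset with a
bottom element `⊥` (the empty face) in which every lower interval `[⊥, F]` is a Boolean
lattice (of rank `rk F`) — the `f`-polynomial of the barycentric subdivision, whose
`(k-1)`-faces are the chains `F₁ < ⋯ < F_k` of nonempty faces, equals `E` applied to the
`f`-polynomial of `Δ`, where `E` is the linear operator with `E(binom(x,k)) = x^k`. -/
theorem fpolynomial_barycentric_subdivision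
    (P : Type) [Fintype P] [PartialOrder P] [OrderBot P]
    (rk : P → ℕ)
    (hbool : ∀ F : P, Nonempty ((Set.Icc (⊥ : P) F) ≃o Finset (Fin (rk F))))
    (E : Polynomial ℝ →ₗ[ℝ] Polynomial ℝ)
    (hE : ∀ k : ℕ,
      E ((k.factorial : ℝ)⁻¹ • ∏ i ∈ Finset.range k, (X - C (i : ℝ))) = X ^ k) :
    ∑ k ∈ Finset.range (Fintype.card P + 1),
        C ((Nat.card {c : Fin k → P // StrictMono c ∧ ∀ i, c i ≠ ⊥} : ℕ) : ℝ) * X ^ k =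
      E (∑ F : P, X ^ rk F) := by
  have hface (F : P) : E (X ^ rk F) =
      ∑ k ∈ range (Fintype.card P + 1), C (surjCount (rk F) k : ℝ) * X ^ k := by
    rw [X_pow_eq_sum_surjCount_smul_binomialPoly ℝ
      (le_card_of_equiv_finset (hbool F).some.toEquiv), map_sum]
    refine sum_congr rfl fun k _ => ?_
    rw [map_smul, binomialPoly, hE, smul_eq_C_mul]
  simp only [card_nonBotChains_eq_sum_surjCount hbool, Nat.cast_sum, map_sum, sum_mul, hface]
  exact sum_comm
end

section
/- The operator E defined by E(binom(x,k)) = x^k commutes with the involution I(f)(x) = f(-1-x): for every polynomial f, E(f)(-1-x) = E(f(-1-x))(x). -/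
open Polynomial Finset

/-!
The binomial polynomials are `Ring.choose X k` in the binomial ring `ℝ[X]`. There, the negation
rule and Chu–Vandermonde give `choose (-1 - x) k = (-1)^k ∑ⱼ (k choose j) choose x j`, while the
binomial theorem gives `(-1 - x)^k = (-1)^k ∑ⱼ (k choose j) x^j`. The two expansions have the same
coefficients, so `E` intertwines `f ↦ f.comp (-1 - X)` on every binomial polynomial, and these
span `ℝ[X]`.
-/

theorem neg_one_sub_pow {R : Type*} [Ring R] (r : R) (k : ℕ) :
    (-1 - r) ^ k = Int.negOnePow k • ∑ ij ∈ antidiagonal k, k.choose ij.1 • r ^ ij.2 := by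
  rw [show -1 - r = -(1 + r) by abel, neg_pow, (Commute.one_left r).add_pow', Units.smul_def,
    Int.negOnePow_def]
  simp

namespace Ring

theorem choose_neg_one_sub {R : Type*} [Ring R] [BinomialRing R] (r : R) (k : ℕ) :
    choose (-1 - r) k =
      Int.negOnePow k • ∑ ij ∈ antidiagonal k, k.choose ij.1 • choose r ij.2 := by
  rw [show -1 - r = -(r + 1) by abel, choose_neg, show r + 1 + k - 1 = k + r by abel,
    add_choose_eq k (Nat.cast_commute k r)]
  simp only [choose_natCast, nsmul_eq_mul]

theorem prod_range_sub_natCast {R : Type*} [CommRing R] [BinomialRing R] (r : R) (k : ℕ) :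
    ∏ i ∈ range k, (r - i) = k.factorial • choose r k := by
  rw [← descPochhammer_eq_factorial_smul_choose, ← aeval_eq_smeval, aeval_def, eval₂_eq_eval_map,
    descPochhammer_map, descPochhammer_eval_eq_prod_range]

end Ring

namespace Polynomial

variable {K : Type*} [Field K] [CharZero K]

theorem choose_X_eq_inv_factorial_smul_prod (k : ℕ) :
    Ring.choose (X : K[X]) k = (k.factorial : K)⁻¹ • ∏ i ∈ range k, (X - C (i : K)) := by
  simp only [map_natCast, Ring.prod_range_sub_natCast, ← Nat.cast_smul_eq_nsmul K]
  rw [inv_smul_smul₀ (Nat.cast_ne_zero.mpr k.factorial_ne_zero)]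

theorem degree_choose_X (k : ℕ) : (Ring.choose (X : K[X]) k).degree = k := by
  rw [choose_X_eq_inv_factorial_smul_prod, degree_smul_of_smul_regular _
    (.of_ne_zero (inv_ne_zero (Nat.cast_ne_zero.mpr k.factorial_ne_zero))), degree_prod]
  simp only [degree_X_sub_C, sum_const, card_range, nsmul_one]

theorem span_range_choose_X : Submodule.span K (Set.range (Ring.choose (X : K[X]))) = ⊤ :=
  let S : Sequence K := ⟨Ring.choose X, degree_choose_X⟩
  S.span fun k => (leadingCoeff_ne_zero.mpr (S.ne_zero k)).isUnit

theorem choose_X_comp_neg_one_sub_X (k : ℕ) :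
    (Ring.choose (X : K[X]) k).comp (-1 - X) =
      Int.negOnePow k • ∑ ij ∈ antidiagonal k, k.choose ij.1 • Ring.choose X ij.2 := by
  rw [comp_eq_aeval, Ring.map_choose, aeval_X, Ring.choose_neg_one_sub]

theorem map_comp_neg_one_sub_X {E : K[X] →ₗ[K] K[X]} (hE : ∀ k, E (Ring.choose X k) = X ^ k)
    (f : K[X]) : E (f.comp (-1 - X)) = (E f).comp (-1 - X) := by
  let I : K[X] →ₗ[K] K[X] := (aeval (-1 - X : K[X])).toLinearMap
  suffices E ∘ₗ I = I ∘ₗ E from LinearMap.congr_fun this f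
  refine LinearMap.ext_on_range span_range_choose_X fun k => ?_
  simp only [LinearMap.comp_apply, AlgHom.toLinearMap_apply, I, ← comp_eq_aeval]
  rw [hE, X_pow_comp, choose_X_comp_neg_one_sub_X, neg_one_sub_pow]
  simp only [Units.smul_def, map_zsmul, map_sum, map_nsmul, hE]

end Polynomial

theorem subdivision_operator_commutes_with_involution
    (E : Polynomial ℝ →ₗ[ℝ] Polynomial ℝ)
    (hE : ∀ k : ℕ,
      E ((k.factorial : ℝ)⁻¹ • ∏ i ∈ Finset.range k, (X - C (i : ℝ))) = X ^ k)
    (f : Polynomial ℝ) :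
    (E f).comp (-1 - X) = E (f.comp (-1 - X)) := by
  have hE' (k : ℕ) : E (Ring.choose X k) = X ^ k := by
    rw [choose_X_eq_inv_factorial_smul_prod]
    exact hE k
  exact (map_comp_neg_one_sub_X hE' f).symm
end

section
/- If A_1, ..., A_n are positive semidefinite Hermitian d×d matrices and A_0 is Hermitian, then the polynomial P(x_1,...,x_n) = det(A_0 + x_1 A_1 + ... + x_n A_n) is either identically zero or stable, i.e. P(z_1,...,z_n) ≠ 0 whenever all Im(z_j) > 0. -/
/-!
If the pencil `A₀ + ∑ zⱼ Aⱼ` is singular at a point `z` of the open upper half polydisc, take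
`v ≠ 0` in its kernel. Since `A₀` and the `Aⱼ` are Hermitian, the imaginary part of
`v* (A₀ + ∑ zⱼ Aⱼ) v = 0` is `∑ Im zⱼ · v* Aⱼ v`, a sum of nonnegative terms, so `v* Aⱼ v = 0` and
hence `Aⱼ v = 0` for every `j`; then also `A₀ v = 0`. Thus `v` lies in the kernel of the pencil at
every point, and its determinant vanishes identically.
-/

open Matrix
open scoped ComplexOrder

namespace Matrix

variable {𝕜 ι m : Type*} [RCLike 𝕜] [Fintype ι] [Fintype m]

lemma add_sum_smul_mulVec (A₀ : Matrix m m 𝕜) (A : ι → Matrix m m 𝕜) (z : ι → 𝕜) (v : m → 𝕜) :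
    (A₀ + ∑ j, z j • A j) *ᵥ v = A₀ *ᵥ v + ∑ j, z j • A j *ᵥ v := by
  simp only [add_mulVec, sum_mulVec, smul_mulVec]

lemma im_star_dotProduct_add_sum_smul_mulVec {A₀ : Matrix m m 𝕜} {A : ι → Matrix m m 𝕜}
    (hA₀ : A₀.IsHermitian) (hA : ∀ j, (A j).IsHermitian) (z : ι → 𝕜) (v : m → 𝕜) :
    RCLike.im (star v ⬝ᵥ (A₀ + ∑ j, z j • A j) *ᵥ v) =
      ∑ j, RCLike.im (z j) * RCLike.re (star v ⬝ᵥ A j *ᵥ v) := by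
  simp only [add_sum_smul_mulVec, dotProduct_add, dotProduct_sum, dotProduct_smul, smul_eq_mul,
    map_add, map_sum, RCLike.mul_im, hA₀.im_star_dotProduct_mulVec_self,
    (hA _).im_star_dotProduct_mulVec_self, mul_zero, zero_add]

lemma PosSemidef.mulVec_eq_zero_of_add_sum_smul_mulVec_eq_zero {A₀ : Matrix m m 𝕜}
    {A : ι → Matrix m m 𝕜} (hA₀ : A₀.IsHermitian) (hA : ∀ j, (A j).PosSemidef) {z : ι → 𝕜}
    (hz : ∀ j, 0 < RCLike.im (z j)) {v : m → 𝕜} (hv : (A₀ + ∑ j, z j • A j) *ᵥ v = 0) (j : ι) :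
    A j *ᵥ v = 0 := by
  have hsum : ∑ j, RCLike.im (z j) * RCLike.re (star v ⬝ᵥ A j *ᵥ v) = 0 := by
    rw [← im_star_dotProduct_add_sum_smul_mulVec hA₀ (fun j ↦ (hA j).isHermitian), hv,
      dotProduct_zero, map_zero]
  have hterm := (Finset.sum_eq_zero_iff_of_nonneg fun j _ ↦
    mul_nonneg (hz j).le ((hA j).re_dotProduct_nonneg v)).mp hsum j (Finset.mem_univ j)
  have hre : RCLike.re (star v ⬝ᵥ A j *ᵥ v) = 0 := (mul_eq_zero.mp hterm).resolve_left (hz j).ne'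
  refine ((hA j).dotProduct_mulVec_zero_iff v).mp (RCLike.ext ?_ ?_)
  · simpa using hre
  · simpa using (hA j).isHermitian.im_star_dotProduct_mulVec_self v

lemma det_add_sum_smul_eq_zero_of_mulVec_eq_zero [DecidableEq m] {A₀ : Matrix m m 𝕜}
    {A : ι → Matrix m m 𝕜} {v : m → 𝕜} (hv : v ≠ 0) (hA₀v : A₀ *ᵥ v = 0)
    (hAv : ∀ j, A j *ᵥ v = 0) (w : ι → 𝕜) : (A₀ + ∑ j, w j • A j).det = 0 :=
  exists_mulVec_eq_zero_iff.mp ⟨v, hv, by simp [add_sum_smul_mulVec, hA₀v, hAv]⟩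

end Matrix

theorem determinantal_polynomial_stable
    (d n : ℕ) (A₀ : Matrix (Fin d) (Fin d) ℂ) (A : Fin n → Matrix (Fin d) (Fin d) ℂ)
    (hA₀ : A₀.IsHermitian) (hA : ∀ j, (A j).PosSemidef) :
    (∀ z : Fin n → ℂ, (A₀ + ∑ j, z j • A j).det = 0) ∨
    (∀ z : Fin n → ℂ, (∀ j, 0 < (z j).im) → (A₀ + ∑ j, z j • A j).det ≠ 0) := by
  refine or_iff_not_imp_right.mpr fun hroot ↦ ?_
  push Not at hroot
  obtain ⟨z, hz, hdet⟩ := hroot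
  obtain ⟨v, hv, hker⟩ := exists_mulVec_eq_zero_iff.mpr hdet
  have hAv := PosSemidef.mulVec_eq_zero_of_add_sum_smul_mulVec_eq_zero hA₀ hA hz hker
  have hA₀v : A₀ *ᵥ v = 0 := by
    simpa [add_sum_smul_mulVec, hAv] using hker
  exact det_add_sum_smul_eq_zero_of_mulVec_eq_zero hv hA₀v hAv
end

section
/- For all n ≥ 0 and variables x_1,...,x_n, the elementary symmetric functions satisfy Σ_{k=0}^n (e_k(x)^2 − e_{k-1}(x)·e_{k+1}(x)) = Σ_{k=0}^{⌊n/2⌋} C_k · Σ_{S ⊆ [n], |S|=2k} (Π_{i∈S} x_i)·(Π_{j∉S} (1 + x_j^2)), where C_k = binom(2k,k)/(k+1) is the k-th Catalan number and e_{-1} = e_{n+1} = 0. -/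
/-!
Let `P(t) = ∏ (t + xᵢ)` and `Q(t) = ∏ (1 + xᵢ t)`. The coefficient of `t^(n + j)` in `P Q` is
`∑ₖ eₖ eₖ₊ⱼ`. On the other hand `(t + a)(1 + a t) = a (1 + t²) + (1 + a²) t`, so expanding the
product over subsets gives `P Q = ∑ₘ fₘ (1 + t²)^m t^(n - m)`, where `fₘ` is the inner sum on the
right-hand side of the theorem. Comparing coefficients,
`∑ₖ eₖ eₖ₊ⱼ = ∑ₘ [t^(m + j)] (1 + t²)^m · fₘ`, and subtracting the case `j = 2` from `j = 0`
leaves `C(2i, i) - C(2i, i + 1) = Cᵢ` in front of `f₂ᵢ` (odd `m` contribute nothing).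
-/

open Finset Polynomial

variable {ι R : Type*} [CommSemiring R]

def esymmOn (s : Finset ι) (x : ι → R) (k : ℕ) : R :=
  ∑ S ∈ s.powersetCard k, ∏ i ∈ S, x i

def weightedEsymm [DecidableEq ι] (s : Finset ι) (x : ι → R) (m : ℕ) : R :=
  ∑ S ∈ s.powersetCard m, (∏ i ∈ S, x i) * ∏ j ∈ s \ S, (1 + x j ^ 2)

theorem esymmOn_eq_zero_of_card_lt {s : Finset ι} (x : ι → R) {k : ℕ} (h : #s < k) :
    esymmOn s x k = 0 := by
  rw [esymmOn, powersetCard_eq_empty.2 h, sum_empty]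

theorem coeff_prod_one_add_C_mul_X (s : Finset ι) (x : ι → R) (k : ℕ) :
    (∏ i ∈ s, (1 + C (x i) * X)).coeff k = esymmOn s x k := by
  classical
  rw [esymmOn, powersetCard_eq_filter, sum_filter, prod_one_add, finsetSum_coeff]
  refine sum_congr rfl fun t _ => ?_
  rw [prod_mul_distrib, prod_const, ← map_prod, coeff_C_mul_X_pow]
  simp only [eq_comm]

theorem natDegree_prod_X_add_C_le (s : Finset ι) (x : ι → R) :
    (∏ i ∈ s, (X + C (x i))).natDegree ≤ #s := by
  refine (natDegree_prod_le _ _).trans ?_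
  simp only [natDegree_add_C, sum_const, smul_eq_mul]
  simpa using Nat.mul_le_mul_left #s (natDegree_X_le (R := R))

theorem prod_X_add_C_mul_prod_one_add_C_mul_X [DecidableEq ι] (s : Finset ι) (x : ι → R) :
    (∏ i ∈ s, (X + C (x i))) * ∏ i ∈ s, (1 + C (x i) * X) =
      ∑ m ∈ range (#s + 1), C (weightedEsymm s x m) * (1 + X ^ 2) ^ m * X ^ (#s - m) := by
  have factor (a : R) : (X + C a) * (1 + C a * X) = C a * (1 + X ^ 2) + C (1 + a ^ 2) * X := by
    simp only [map_add, map_one, map_pow]; ring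
  rw [← prod_mul_distrib, prod_congr rfl fun i _ => factor (x i), prod_add, sum_powerset]
  refine sum_congr rfl fun m _ => ?_
  rw [weightedEsymm, map_sum, sum_mul, sum_mul]
  refine sum_congr rfl fun t ht => ?_
  obtain ⟨hts, rfl⟩ := mem_powersetCard.1 ht
  rw [prod_mul_distrib, prod_mul_distrib, prod_const, prod_const, card_sdiff_of_subset hts,
    ← map_prod, ← map_prod, map_mul]
  ring

theorem coeff_one_add_X_sq_pow (m n : ℕ) :
    ((1 + X ^ 2 : R[X]) ^ m).coeff n = if 2 ∣ n then (m.choose (n / 2) : R) else 0 := by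
  have : (1 + X ^ 2 : R[X]) ^ m = expand R 2 ((1 + X) ^ m) := by simp
  rw [this, coeff_expand two_pos, coeff_one_add_X_pow]

theorem coeff_prod_X_add_C_mul_prod_one_add_C_mul_X (s : Finset ι) (x : ι → R) (j : ℕ) :
    ((∏ i ∈ s, (X + C (x i))) * ∏ i ∈ s, (1 + C (x i) * X)).coeff (#s + j) =
      ∑ k ∈ range (#s + 1), esymmOn s x k * esymmOn s x (k + j) := by
  rw [coeff_mul, Nat.sum_antidiagonal_eq_sum_range_succ_mk,
    ← sum_subset (range_subset_range.2 (by omega : #s + 1 ≤ #s + j + 1)), ← sum_range_reflect]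
  · refine sum_congr rfl fun k hk => ?_
    rw [mem_range] at hk
    rw [prod_X_add_C_coeff _ _ (by omega), coeff_prod_one_add_C_mul_X,
      show #s - (#s + 1 - 1 - k) = k by omega, show #s + j - (#s + 1 - 1 - k) = k + j by omega]
    rfl
  · intro a _ ha
    rw [mem_range] at ha
    rw [coeff_eq_zero_of_natDegree_lt ((natDegree_prod_X_add_C_le s x).trans_lt (by omega)),
      zero_mul]

theorem sum_esymmOn_mul_esymmOn_add [DecidableEq ι] (s : Finset ι) (x : ι → R) (j : ℕ) :
    ∑ k ∈ range (#s + 1), esymmOn s x k * esymmOn s x (k + j) =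
      ∑ m ∈ range (#s + 1), ((1 + X ^ 2 : R[X]) ^ m).coeff (m + j) * weightedEsymm s x m := by
  rw [← coeff_prod_X_add_C_mul_prod_one_add_C_mul_X, prod_X_add_C_mul_prod_one_add_C_mul_X,
    finsetSum_coeff]
  refine sum_congr rfl fun m hm => ?_
  rw [mem_range] at hm
  rw [show #s + j = m + j + (#s - m) by omega, coeff_mul_X_pow, coeff_C_mul, mul_comm]

theorem sum_range_eq_sum_range_half_of_odd_eq_zero {M : Type*} [AddCommMonoid M] (g : ℕ → M)
    (hg : ∀ i, g (2 * i + 1) = 0) (n : ℕ) :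
    ∑ m ∈ range (n + 1), g m = ∑ i ∈ range (n / 2 + 1), g (2 * i) := by
  induction n with
  | zero => simp
  | succ n ih =>
    rw [sum_range_succ, ih]
    obtain ⟨i, hi | hi⟩ := Nat.even_or_odd' (n + 1)
    · rw [show (n + 1) / 2 = n / 2 + 1 by omega, sum_range_succ _ (n / 2 + 1),
        show 2 * (n / 2 + 1) = n + 1 by omega]
    · rw [show (n + 1) / 2 = n / 2 by omega, hi, hg, add_zero]

theorem cast_choose_two_mul_sub_choose_succ {K : Type*} [Field K] [CharZero K] (k : ℕ) :
    ((2 * k).choose k : K) - (2 * k).choose (k + 1) = (2 * k).choose k / (k + 1) := by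
  have h := Nat.choose_succ_right_eq (2 * k) k
  rw [show 2 * k - k = k by omega] at h
  have h' : ((2 * k).choose (k + 1) : K) * (k + 1) = (2 * k).choose k * k := by exact_mod_cast h
  field_simp
  linear_combination -h'

theorem sum_esymmOn_sq_sub_eq_sum_catalan [DecidableEq ι] {K : Type*} [Field K] [CharZero K]
    (s : Finset ι) (x : ι → K) :
    ∑ k ∈ range (#s + 1), (esymmOn s x k ^ 2 -
        if k = 0 then 0 else esymmOn s x (k - 1) * esymmOn s x (k + 1)) =
      ∑ k ∈ range (#s / 2 + 1), ((2 * k).choose k : K) / (k + 1) * weightedEsymm s x (2 * k) := by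
  have shifted : ∑ k ∈ range (#s + 1),
      (if k = 0 then 0 else esymmOn s x (k - 1) * esymmOn s x (k + 1)) =
        ∑ k ∈ range (#s + 1), esymmOn s x k * esymmOn s x (k + 2) := by
    rw [sum_range_succ', sum_range_succ _ #s, esymmOn_eq_zero_of_card_lt x (by omega : #s < #s + 2)]
    simp
  have sum_sq_eq := sum_esymmOn_mul_esymmOn_add s x 0
  simp only [add_zero, ← sq] at sum_sq_eq
  rw [sum_sub_distrib, shifted, sum_sq_eq, sum_esymmOn_mul_esymmOn_add s x 2, ← sum_sub_distrib,
    sum_range_eq_sum_range_half_of_odd_eq_zero]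
  · refine sum_congr rfl fun i _ => ?_
    rw [← sub_mul, coeff_one_add_X_sq_pow, coeff_one_add_X_sq_pow]
    simp [show (2 * i + 2) / 2 = i + 1 by omega, cast_choose_two_mul_sub_choose_succ]
  · intro i
    rw [← sub_mul, coeff_one_add_X_sq_pow, coeff_one_add_X_sq_pow]
    simp [show ¬ 2 ∣ 2 * i + 1 by omega, show ¬ 2 ∣ 2 * i + 1 + 2 by omega]

theorem esymm_squares_catalan_identity (n : ℕ) (x : Fin n → ℝ) :
    (∑ k ∈ range (n + 1),
        ((∑ S ∈ powersetCard k (univ : Finset (Fin n)), ∏ i ∈ S, x i) ^ 2 -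
          (if k = 0 then 0 else
            (∑ S ∈ powersetCard (k - 1) (univ : Finset (Fin n)), ∏ i ∈ S, x i) *
              (∑ S ∈ powersetCard (k + 1) (univ : Finset (Fin n)), ∏ i ∈ S, x i)))) =
      ∑ k ∈ range (n / 2 + 1),
        (((2 * k).choose k : ℝ) / (k + 1)) *
          ∑ S ∈ powersetCard (2 * k) (univ : Finset (Fin n)),
            (∏ i ∈ S, x i) * ∏ j ∈ Sᶜ, (1 + x j ^ 2) := by
  have h := sum_esymmOn_sq_sub_eq_sum_catalan (univ : Finset (Fin n)) x
  rw [card_univ, Fintype.card_fin] at h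
  simpa only [esymmOn, weightedEsymm, compl_eq_univ_sdiff] using h
end

section
/- For every n ≥ 0, Σ_{k=0}^{⌊n/2⌋} C_k·binom(n,2k)·x^k·(1+x)^{n-2k} = Σ_{k=0}^n (1/(n+1))·binom(n+1,k)·binom(n+1,k+1)·x^k, where C_k = binom(2k,k)/(k+1) is the k-th Catalan number; in particular the coefficients of the Narayana polynomial on the right are the γ-expansion coefficients C_k·binom(n,2k). -/
/-!
Comparing coefficients of `x ^ j`, the left side contributes
`∑ k, C_k * choose n (2k) * choose (n - 2k) (j - k)`.
Grouping the factors as `n! / ((k+a)! (k-a)! (j-k)! (n-j-k)!)` and summing over `k` with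
Vandermonde's identity gives
`∑ k, choose n (2k) * choose (2k) (k+a) * choose (n-2k) (j-k) = choose n (j-a) * choose n (j+a)`.
Since `C_k = choose (2k) k - choose (2k) (k+1)`, the coefficient is therefore
`choose n j ^ 2 - choose n (j-1) * choose n (j+1)`, and `n + 1` times this is
`choose (n+1) j * choose (n+1) (j+1)`.
-/

open Finset Polynomial

theorem catalan_add_choose_succ (k : ℕ) :
    catalan k + (2 * k).choose (k + 1) = (2 * k).choose k := by
  apply Nat.eq_of_mul_eq_mul_left (show 0 < k + 1 by omega)
  have h := Nat.choose_succ_right_eq (2 * k) k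
  rw [show 2 * k - k = k by omega] at h
  rw [mul_add, succ_mul_catalan_eq_centralBinom, Nat.centralBinom, mul_comm (k + 1), h]
  ring

namespace Nat

theorem choose_mul_choose_sub_comm (m p q : ℕ) :
    m.choose p * (m - p).choose q = m.choose q * (m - q).choose p := by
  have hp := choose_mul (n := m) (Nat.le_add_right p q)
  have hq := choose_mul (n := m) (Nat.le_add_left q p)
  rw [Nat.add_sub_cancel_left] at hp
  rw [Nat.add_sub_cancel] at hq
  rw [← hp, ← hq, choose_symm_add]

theorem choose_mul_choose_mul_choose_eq {n a k j : ℕ} (hak : a ≤ k) (hkj : k ≤ j) :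
    n.choose (2 * k) * (2 * k).choose (k + a) * (n - 2 * k).choose (j - k) =
      n.choose (j + a) * (j + a).choose (k + a) * (n - (j + a)).choose (k - a) := by
  calc n.choose (2 * k) * (2 * k).choose (k + a) * (n - 2 * k).choose (j - k)
      = n.choose (k + a) * ((n - (k + a)).choose (k - a) *
          (n - (k + a) - (k - a)).choose (j - k)) := by
        rw [choose_mul (by omega), show 2 * k - (k + a) = k - a by omega,
          show n - (k + a) - (k - a) = n - 2 * k by omega, mul_assoc]
    _ = n.choose (k + a) * (n - (k + a)).choose (j - k) * (n - (j + a)).choose (k - a) := by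
        rw [choose_mul_choose_sub_comm, show n - (k + a) - (j - k) = n - (j + a) by omega,
          mul_assoc]
    _ = _ := by
        rw [choose_mul (by omega : k + a ≤ j + a), show j + a - (k + a) = j - k by omega]

theorem sum_range_choose_sub_mul_choose (m l p : ℕ) :
    ∑ t ∈ range (p + 1), m.choose (p - t) * l.choose t = (m + l).choose p := by
  rw [add_comm m, add_choose_eq,
    Nat.sum_antidiagonal_eq_sum_range_succ (fun i j => l.choose i * m.choose j)]
  exact sum_congr rfl fun t _ => mul_comm _ _

/-- Stated for `j = p + a`, so that the truncated subtraction `j - a` never occurs. -/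
theorem sum_choose_mul_choose_mul_choose (n a p : ℕ) :
    ∑ k ∈ range (p + a + 1),
        n.choose (2 * k) * (2 * k).choose (k + a) * (n - 2 * k).choose (p + a - k) =
      n.choose p * n.choose (p + 2 * a) := by
  have hlow : ∑ k ∈ range a,
      n.choose (2 * k) * (2 * k).choose (k + a) * (n - 2 * k).choose (p + a - k) = 0 :=
    sum_eq_zero fun k hk => by
      rw [choose_eq_zero_of_lt (by grind : 2 * k < k + a), mul_zero, zero_mul]
  have hterm : ∀ t ∈ range (p + 1),
      n.choose (2 * (a + t)) * (2 * (a + t)).choose (a + t + a) *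
          (n - 2 * (a + t)).choose (p + a - (a + t)) =
        n.choose (p + 2 * a) * ((p + 2 * a).choose (p - t) * (n - (p + 2 * a)).choose t) := by
    intro t ht
    rw [choose_mul_choose_mul_choose_eq (by omega) (by grind), mul_assoc,
      choose_symm_of_eq_add (by grind : p + a + a = a + t + a + (p - t)),
      show p + a + a = p + 2 * a by omega, Nat.add_sub_cancel_left]
  rw [show p + a + 1 = a + (p + 1) by omega, sum_range_add, hlow, zero_add,
    sum_congr rfl hterm, ← mul_sum]
  rcases le_or_gt (p + 2 * a) n with h | h
  · rw [sum_range_choose_sub_mul_choose, Nat.add_sub_cancel' h, mul_comm]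
  · rw [choose_eq_zero_of_lt h, zero_mul, mul_zero]

theorem succ_mul_choose_sq (n p : ℕ) :
    (n + 1) * n.choose (p + 1) ^ 2 =
      (n + 1) * (n.choose p * n.choose (p + 2)) +
        (n + 1).choose (p + 1) * (n + 1).choose (p + 2) := by
  rw [choose_succ_succ' n p, choose_succ_succ' n (p + 1)]
  rcases le_or_gt (p + 1) n with h | h
  · obtain ⟨m, rfl⟩ := exists_add_of_le h
    have hlow := choose_succ_right_eq (p + 1 + m) p
    have hhigh := choose_succ_right_eq (p + 1 + m) (p + 1)
    rw [show p + 1 + m - p = m + 1 by omega] at hlow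
    rw [Nat.add_sub_cancel_left] at hhigh
    -- `hlow` and `hhigh` express the outer binomials through `choose (p+1+m) (p+1)` up to the
    -- denominators `m + 1` and `p + 2`, which are cleared first.
    apply Nat.eq_of_mul_eq_mul_left (show 0 < (m + 1) * (p + 2) by positivity)
    zify at hlow hhigh ⊢
    linear_combination
      ((p + m + 3) * (p + 2) * ((p + 1 + m).choose (p + 2) : ℤ) +
          (p + 2) * ((p + 1 + m).choose (p + 1) : ℤ)) * hlow -
        ((p + m + 3) * (p + 1) + (m + 1)) * ((p + 1 + m).choose (p + 1) : ℤ) * hhigh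
  · rw [choose_eq_zero_of_lt h, choose_eq_zero_of_lt (by omega : n < p + 2)]
    simp

theorem succ_mul_sum_catalan_mul_choose_mul_choose (n j : ℕ) :
    (n + 1) * ∑ k ∈ range (j + 1), catalan k * n.choose (2 * k) * (n - 2 * k).choose (j - k) =
      (n + 1).choose j * (n + 1).choose (j + 1) := by
  cases j with
  | zero => simp [mul_comm]
  | succ p =>
    have hsplit : ∑ k ∈ range (p + 1 + 1),
          catalan k * n.choose (2 * k) * (n - 2 * k).choose (p + 1 - k) +
        n.choose p * n.choose (p + 2) = n.choose (p + 1) ^ 2 := by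
      have hcentral := sum_choose_mul_choose_mul_choose n 0 (p + 1)
      simp only [add_zero, mul_zero] at hcentral
      rw [← sum_choose_mul_choose_mul_choose n 1 p, ← sum_add_distrib, sq, ← hcentral]
      refine sum_congr rfl fun k _ => ?_
      rw [← catalan_add_choose_succ]
      ring
    apply Nat.add_right_cancel (m := (n + 1) * (n.choose p * n.choose (p + 2)))
    rw [← mul_add, hsplit, succ_mul_choose_sq, add_comm]

end Nat

theorem Finset.sum_range_ite_le {M : Type*} [AddCommMonoid M] {N : ℕ} (j : ℕ) (g : ℕ → M)
    (hg : ∀ k, N ≤ k → g k = 0) :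
    ∑ k ∈ range N, (if k ≤ j then g k else 0) = ∑ k ∈ range (j + 1), g k := by
  rw [← sum_filter]
  apply sum_subset
  · intro k
    simp only [mem_filter, mem_range]
    omega
  · intro k hk hk'
    simp only [mem_filter, mem_range, not_and] at hk hk'
    exact hg k (by omega)

namespace Polynomial

theorem succ_mul_sum_catalan_gamma_X (n : ℕ) :
    ((n + 1 : ℕ) : ℕ[X]) * ∑ k ∈ range (n / 2 + 1),
        C (catalan k * n.choose (2 * k)) * X ^ k * (1 + X) ^ (n - 2 * k) =
      ∑ j ∈ range (n + 1), C ((n + 1).choose j * (n + 1).choose (j + 1)) * X ^ j := by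
  ext j
  simp only [coeff_natCast_mul, finsetSum_coeff, mul_assoc, coeff_C_mul, coeff_X_pow_mul',
    coeff_one_add_X_pow, Nat.cast_id, coeff_X_pow, mul_ite, mul_one, mul_zero, sum_ite_eq,
    mem_range]
  rw [sum_range_ite_le]
  · simp only [← mul_assoc, Nat.succ_mul_sum_catalan_mul_choose_mul_choose]
    split_ifs with hj
    · rfl
    · rw [Nat.choose_eq_zero_of_lt (by omega : n + 1 < j + 1), mul_zero]
  · intro k hk
    rw [Nat.choose_eq_zero_of_lt (by omega : n < 2 * k), zero_mul, mul_zero]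

end Polynomial

theorem succ_mul_sum_catalan_gamma {R : Type*} [CommSemiring R] (n : ℕ) (x : R) :
    ((n : R) + 1) * ∑ k ∈ range (n / 2 + 1),
        (catalan k : R) * n.choose (2 * k) * x ^ k * (1 + x) ^ (n - 2 * k) =
      ∑ j ∈ range (n + 1), ((n + 1).choose j : R) * (n + 1).choose (j + 1) * x ^ j := by
  simpa using congrArg (aeval x) (succ_mul_sum_catalan_gamma_X n)

theorem catalan_gamma_narayana_identity (n : ℕ) (x : ℝ) :
    ∑ k ∈ Finset.range (n / 2 + 1),
        (((2 * k).choose k : ℝ) / (k + 1)) * (n.choose (2 * k)) *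
          x ^ k * (1 + x) ^ (n - 2 * k) =
      ∑ k ∈ Finset.range (n + 1),
        (1 / (n + 1 : ℝ)) * ((n + 1).choose k) * ((n + 1).choose (k + 1)) * x ^ k := by
  have hcatalan (k : ℕ) : ((2 * k).choose k : ℝ) / (k + 1) = catalan k := by
    rw [div_eq_iff (by positivity), ← Nat.centralBinom, ← succ_mul_catalan_eq_centralBinom]
    push_cast
    ring
  apply mul_left_cancel₀ (by positivity : (n + 1 : ℝ) ≠ 0)
  simp only [hcatalan]
  rw [succ_mul_sum_catalan_gamma, mul_sum]
  refine sum_congr rfl fun k _ => ?_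
  field_simp
end
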